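/- arXiv:2202.08222 — 11 statements merged into one kernel-verified Lean document; each statement's English description precedes it below -/
import Mathlib

section
/- Let G be a group and (σ1,σ2,σ3,σ4) ∈ G^4 with σ1σ2σ3σ4 = 1. If (σ3σ4)^r = 1 for some r ∈ ℕ, then the r-th iterate of β_{12} applied to (σ1,σ2,σ3,σ4) is simultaneously conjugate to (σ1,σ2,σ3,σ4). Similarly, if (σ2σ4)^r = 1 then the r-th iterate of β_{13} yields a tuple simultaneously conjugate to (σ1,σ2,σ3,σ4), and if (σ2σ3)^r = 1 then the r-th iterate of β_{14} yields a tuple simultaneously conjugate to (σ1,σ2,σ3,σ4). -/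
namespace Braid

variable {G : Type*} [Group G]

/-- Simultaneous conjugacy of 4-tuples: some `γ` conjugates each entry of the
first tuple to the corresponding entry of the second. -/
def SimConj4 (σ τ : G × G × G × G) : Prop :=
  ∃ γ : G, γ⁻¹ * σ.1 * γ = τ.1 ∧ γ⁻¹ * σ.2.1 * γ = τ.2.1 ∧
    γ⁻¹ * σ.2.2.1 * γ = τ.2.2.1 ∧ γ⁻¹ * σ.2.2.2 * γ = τ.2.2.2

/-- The braid move β₂. -/
def b2 (σ : G × G × G × G) : G × G × G × G :=
  (σ.1 * σ.2.1 * σ.1⁻¹, σ.1, σ.2.2.1, σ.2.2.2)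

/-- The braid move β₃. -/
def b3 (σ : G × G × G × G) : G × G × G × G :=
  (σ.1, σ.2.1 * σ.2.2.1 * σ.2.1⁻¹, σ.2.1, σ.2.2.2)

/-- The braid move β₄. -/
def b4 (σ : G × G × G × G) : G × G × G × G :=
  (σ.1, σ.2.1, σ.2.2.1 * σ.2.2.2 * σ.2.2.1⁻¹, σ.2.2.1)

/-- The inverse braid move β₂⁻¹. -/
def b2i (σ : G × G × G × G) : G × G × G × G :=
  (σ.2.1, σ.2.1⁻¹ * σ.1 * σ.2.1, σ.2.2.1, σ.2.2.2)

/-- The inverse braid move β₃⁻¹. -/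
def b3i (σ : G × G × G × G) : G × G × G × G :=
  (σ.1, σ.2.2.1, σ.2.2.1⁻¹ * σ.2.1 * σ.2.2.1, σ.2.2.2)

/-- The inverse braid move β₄⁻¹. -/
def b4i (σ : G × G × G × G) : G × G × G × G :=
  (σ.1, σ.2.1, σ.2.2.2, σ.2.2.2⁻¹ * σ.2.2.1 * σ.2.2.2)

/-- β₁₂ = β₂² (composites applied left to right). -/
def b12 : G × G × G × G → G × G × G × G := b2 ∘ b2

/-- β₁₃ = β₂⁻¹β₃²β₂ (apply β₂⁻¹, then β₃ twice, then β₂). -/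
def b13 : G × G × G × G → G × G × G × G := b2 ∘ b3 ∘ b3 ∘ b2i

/-- β₁₄ = β₂⁻¹β₃⁻¹β₄²β₃β₂. -/
def b14 : G × G × G × G → G × G × G × G := b2 ∘ b3 ∘ b4 ∘ b4 ∘ b3i ∘ b2i

/-- β₂₃ = β₃². -/
def b23 : G × G × G × G → G × G × G × G := b3 ∘ b3

/-- β₂₄ = β₃⁻¹β₄²β₃. -/
def b24 : G × G × G × G → G × G × G × G := b3 ∘ b4 ∘ b4 ∘ b3i

/-- β₃₄ = β₄². -/
def b34 : G × G × G × G → G × G × G × G := b4 ∘ b4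

/-- β₁₂⁻¹ = β₂⁻². -/
def b12inv : G × G × G × G → G × G × G × G := b2i ∘ b2i

/-- β₁₄⁻¹ = β₂⁻¹β₃⁻¹β₄⁻²β₃β₂. -/
def b14inv : G × G × G × G → G × G × G × G := b2 ∘ b3 ∘ b4i ∘ b4i ∘ b3i ∘ b2i

/-- φ₄,₁ = β₂β₄⁻¹ (apply β₂, then β₄⁻¹). -/
def phi41 : G × G × G × G → G × G × G × G := b4i ∘ b2

/-- φ₄,₂ = (β₂β₃β₄)². -/
def phi42 : G × G × G × G → G × G × G × G := b4 ∘ b3 ∘ b2 ∘ b4 ∘ b3 ∘ b2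

/-- A generating 4-system of `G`: product of the entries is 1 and the entries generate `G`. -/
def IsGenSys4 (σ : G × G × G × G) : Prop :=
  σ.1 * σ.2.1 * σ.2.2.1 * σ.2.2.2 = 1 ∧
    Subgroup.closure {σ.1, σ.2.1, σ.2.2.1, σ.2.2.2} = ⊤

end Braid

section Aux

open Braid

variable {G : Type*} [Group G]

private lemma conj_step (f x : G) (n : ℕ) :
    f ^ n * (f * x * f⁻¹) * (f ^ n)⁻¹ = f ^ (n + 1) * x * (f ^ (n + 1))⁻¹ := by
  simp only [pow_succ, mul_inv_rev, mul_assoc]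

private lemma step12 (a b c d : G) :
    b12 (a, b, c, d) =
      ((a*b) * a * (a*b)⁻¹, (a*b) * b * (a*b)⁻¹, c, d) := by
  simp only [b12, Function.comp_apply, b2, Prod.mk.injEq]
  and_intros <;> first | trivial | group

private lemma step13 (a b c d : G) (h : a * b * c * d = 1) :
    b13 (a, b, c, d) =
      ((b*d)⁻¹ * a * ((b*d)⁻¹)⁻¹, b, (d*b)⁻¹ * c * ((d*b)⁻¹)⁻¹, d) := by
  obtain rfl : d = (a*b*c)⁻¹ := (inv_eq_of_mul_eq_one_right h).symm
  simp only [b13, Function.comp_apply, b2, b3, b2i, Prod.mk.injEq]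
  and_intros <;> first | trivial | group

private lemma step14 (a b c d : G) (h : a * b * c * d = 1) :
    b14 (a, b, c, d) =
      ((b*c)⁻¹ * a * ((b*c)⁻¹)⁻¹, b, c, (b*c)⁻¹ * d * ((b*c)⁻¹)⁻¹) := by
  obtain rfl : d = (a*b*c)⁻¹ := (inv_eq_of_mul_eq_one_right h).symm
  simp only [b14, Function.comp_apply, b2, b3, b4, b3i, b2i, Prod.mk.injEq]
  and_intros <;> first | trivial | group

private lemma iter12 (r : ℕ) : ∀ a b c d : G,
    b12^[r] (a, b, c, d) =
      ((a*b)^r * a * ((a*b)^r)⁻¹, (a*b)^r * b * ((a*b)^r)⁻¹, c, d) := by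
  induction r with
  | zero => intro a b c d; simp
  | succ n ih =>
      intro a b c d
      rw [Function.iterate_succ_apply, step12, ih,
        show (a*b * a * (a*b)⁻¹) * (a*b * b * (a*b)⁻¹) = a*b from by group,
        conj_step, conj_step]

private lemma iter13 (b d : G) (r : ℕ) : ∀ a c : G, a * b * c * d = 1 →
    b13^[r] (a, b, c, d) =
      (((b*d)⁻¹)^r * a * ((((b*d)⁻¹)^r))⁻¹, b,
        ((d*b)⁻¹)^r * c * ((((d*b)⁻¹)^r))⁻¹, d) := by
  induction r with
  | zero => intro a c h; simp
  | succ n ih =>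
      intro a c h
      have h' : ((b*d)⁻¹ * a * ((b*d)⁻¹)⁻¹) * b * ((d*b)⁻¹ * c * ((d*b)⁻¹)⁻¹) * d = 1 := by
        rw [show ((b*d)⁻¹ * a * ((b*d)⁻¹)⁻¹) * b * ((d*b)⁻¹ * c * ((d*b)⁻¹)⁻¹) * d
            = (b*d)⁻¹ * (a*b*c*d) * (b*d) from by group, h]
        group
      rw [Function.iterate_succ_apply, step13 a b c d h, ih _ _ h', conj_step, conj_step]

private lemma iter14 (b c : G) (r : ℕ) : ∀ a d : G, a * b * c * d = 1 →
    b14^[r] (a, b, c, d) =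
      (((b*c)⁻¹)^r * a * ((((b*c)⁻¹)^r))⁻¹, b, c,
        ((b*c)⁻¹)^r * d * ((((b*c)⁻¹)^r))⁻¹) := by
  induction r with
  | zero => intro a d h; simp
  | succ n ih =>
      intro a d h
      have h' : ((b*c)⁻¹ * a * ((b*c)⁻¹)⁻¹) * b * c * ((b*c)⁻¹ * d * ((b*c)⁻¹)⁻¹) = 1 := by
        rw [show ((b*c)⁻¹ * a * ((b*c)⁻¹)⁻¹) * b * c * ((b*c)⁻¹ * d * ((b*c)⁻¹)⁻¹)
            = (b*c)⁻¹ * (a*b*c*d) * (b*c) from by group, h]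
        group
      rw [Function.iterate_succ_apply, step14 a b c d h, ih _ _ h', conj_step, conj_step]

end Aux


open Braid in
/-- If `(σ₃σ₄)^r = 1` then the `r`-th iterate of β₁₂ applied to `(σ₁,σ₂,σ₃,σ₄)`
(product 1) is simultaneously conjugate to the original tuple; similarly for β₁₃
with `(σ₂σ₄)^r = 1` and for β₁₄ with `(σ₂σ₃)^r = 1`. -/
theorem statement3 {G : Type*} [Group G] (σ1 σ2 σ3 σ4 : G)
    (hrel : σ1 * σ2 * σ3 * σ4 = 1) (r : ℕ) :
    ((σ3 * σ4) ^ r = 1 →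
      SimConj4 (b12^[r] (σ1, σ2, σ3, σ4)) (σ1, σ2, σ3, σ4)) ∧
    ((σ2 * σ4) ^ r = 1 →
      SimConj4 (b13^[r] (σ1, σ2, σ3, σ4)) (σ1, σ2, σ3, σ4)) ∧
    ((σ2 * σ3) ^ r = 1 →
      SimConj4 (b14^[r] (σ1, σ2, σ3, σ4)) (σ1, σ2, σ3, σ4)) := by
  have hd : σ4 = (σ1*σ2*σ3)⁻¹ := (inv_eq_of_mul_eq_one_right hrel).symm
  refine ⟨fun hr => ?_, fun hr => ?_, fun hr => ?_⟩
  · have h1 : (σ1*σ2)^r = 1 := by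
      have e : σ1*σ2 = (σ3*σ4)⁻¹ := by rw [hd]; group
      rw [e, inv_pow, hr, inv_one]
    rw [iter12, h1]
    exact ⟨1, by simp⟩
  · have h1 : ((σ2*σ4)⁻¹)^r = 1 := by rw [inv_pow, hr, inv_one]
    have h2 : ((σ4*σ2)⁻¹)^r = 1 := by
      have e : (σ4*σ2)⁻¹ = σ2⁻¹ * (σ2*σ4)⁻¹ * σ2⁻¹⁻¹ := by group
      rw [e, conj_pow, inv_pow, hr, inv_one]; group
    rw [iter13 _ _ _ _ _ hrel, h1, h2]
    exact ⟨1, by simp⟩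
  · have h1 : ((σ2*σ3)⁻¹)^r = 1 := by rw [inv_pow, hr, inv_one]
    rw [iter14 _ _ _ _ _ hrel, h1]
    exact ⟨1, by simp⟩
end

section
/- Let G be a group and (σ1,σ2,σ3,σ4) ∈ G^4 with σ1σ2σ3σ4 = 1. Then: (i) applying φ_{4,1} yields a tuple simultaneously conjugate to (σ2, σ1, σ1⁻¹σ4σ1, σ1⁻¹σ4⁻¹σ3σ4σ1); (ii) applying φ_{4,2} yields a tuple simultaneously conjugate to (σ3, σ4, σ1, σ2); (iii) applying φ_{4,1} twice yields a tuple simultaneously conjugate to (σ1,σ2,σ3,σ4), and the same holds for applying φ_{4,2} twice; (iv) applying φ_{4,1} and then φ_{4,2} yields a tuple simultaneously conjugate to the tuple obtained by applying φ_{4,2} and then φ_{4,1}. -/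
open Braid in
/-- The action of φ₄,₁ = β₂β₄⁻¹ and φ₄,₂ = (β₂β₃β₄)² on a 4-tuple with product 1,
up to simultaneous conjugacy: explicit formulas, both are involutions, and they
commute. -/
theorem statement4 {G : Type*} [Group G] (σ1 σ2 σ3 σ4 : G)
    (hrel : σ1 * σ2 * σ3 * σ4 = 1) :
    SimConj4 (phi41 (σ1, σ2, σ3, σ4))
      (σ2, σ1, σ1⁻¹ * σ4 * σ1, σ1⁻¹ * σ4⁻¹ * σ3 * σ4 * σ1) ∧
    SimConj4 (phi42 (σ1, σ2, σ3, σ4)) (σ3, σ4, σ1, σ2) ∧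
    SimConj4 (phi41 (phi41 (σ1, σ2, σ3, σ4))) (σ1, σ2, σ3, σ4) ∧
    SimConj4 (phi42 (phi42 (σ1, σ2, σ3, σ4))) (σ1, σ2, σ3, σ4) ∧
    SimConj4 (phi42 (phi41 (σ1, σ2, σ3, σ4))) (phi41 (phi42 (σ1, σ2, σ3, σ4))) := by
  have h4 : σ4 = (σ1 * σ2 * σ3)⁻¹ := eq_inv_of_mul_eq_one_right hrel
  subst h4
  simp only [phi41, phi42, b2, b3, b4, b4i, Function.comp, SimConj4]
  refine ⟨⟨σ1, by group, by group, by group, by group⟩,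
    ⟨σ1 * σ2, by group, by group, by group, by group⟩,
    ⟨σ1 * σ2, by group, by group, by group, by group⟩,
    ⟨1, by group, by group, by group, by group⟩,
    ⟨σ1 * σ2, by group, by group, by group, by group⟩⟩
end

section
/- Let G be a group with trivial center, let σ1, σ2, σ3, σ4 ∈ G with G generated by σ1, σ2, σ3, and suppose τ ∈ G satisfies τ⁻¹σ1τ = σ2, τ⁻¹σ2τ = σ1, τ⁻¹σ3τ = σ1⁻¹σ4σ1, and τ⁻¹σ4τ = σ2σ3σ2⁻¹. Then τ² = 1. -/
/-- If `G` has trivial center, is generated by `σ₁, σ₂, σ₃`, and `τ` conjugates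
`σ₁ ↦ σ₂`, `σ₂ ↦ σ₁`, `σ₃ ↦ σ₁⁻¹σ₄σ₁`, `σ₄ ↦ σ₂σ₃σ₂⁻¹`, then `τ² = 1`. -/
theorem statement5 {G : Type*} [Group G] (hZ : Subgroup.center G = ⊥)
    (σ1 σ2 σ3 σ4 τ : G)
    (hgen : Subgroup.closure {σ1, σ2, σ3} = ⊤)
    (h1 : τ⁻¹ * σ1 * τ = σ2) (h2 : τ⁻¹ * σ2 * τ = σ1)
    (h3 : τ⁻¹ * σ3 * τ = σ1⁻¹ * σ4 * σ1)
    (h4 : τ⁻¹ * σ4 * τ = σ2 * σ3 * σ2⁻¹) :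
    τ ^ 2 = 1 := by
  have e1 : σ1 * τ = τ * σ2 := by rw [← h1]; group
  have e2 : σ2 * τ = τ * σ1 := by rw [← h2]; group
  have c1 : σ1 * τ ^ 2 = τ ^ 2 * σ1 := by
    rw [pow_two, ← mul_assoc, e1, mul_assoc, e2, ← mul_assoc]
  have c2 : σ2 * τ ^ 2 = τ ^ 2 * σ2 := by
    rw [pow_two, ← mul_assoc, e2, mul_assoc, e1, ← mul_assoc]
  have c3 : σ3 * τ ^ 2 = τ ^ 2 * σ3 := by
    have key : τ⁻¹ * (τ⁻¹ * σ3 * τ) * τ = σ3 := by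
      rw [h3]
      have : τ⁻¹ * (σ1⁻¹ * σ4 * σ1) * τ
          = (τ⁻¹ * σ1 * τ)⁻¹ * (τ⁻¹ * σ4 * τ) * (τ⁻¹ * σ1 * τ) := by group
      rw [this, h1, h4]; group
    have : σ3 * (τ * τ) = (τ * τ) * (τ⁻¹ * (τ⁻¹ * σ3 * τ) * τ) := by group
    rw [pow_two, this, key]
  have hc : τ ^ 2 ∈ Subgroup.center G := by
    rw [Subgroup.mem_center_iff]
    intro g
    have hg : g ∈ Subgroup.closure {σ1, σ2, σ3} := hgen ▸ Subgroup.mem_top g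
    induction hg using Subgroup.closure_induction with
    | mem x hx =>
      rcases hx with rfl | rfl | rfl
      · exact c1
      · exact c2
      · exact c3
    | one => simp
    | mul x y _ _ hx hy =>
      show Commute (x * y) (τ ^ 2)
      exact (Commute.mul_left hx hy : Commute (x * y) (τ ^ 2))
    | inv x _ hx =>
      exact (Commute.inv_left hx : Commute x⁻¹ (τ ^ 2))
  rw [hZ, Subgroup.mem_bot] at hc
  exact hc
end

section
/- Let G be a nontrivial group with trivial center and σ1, σ2 ∈ G with G = ⟨σ1, σ2⟩ and (σ1σ2)² = 1. Set e1 = (σ1, σ1, σ2, σ1σ2σ1⁻¹) and e2 = (σ1, σ2σ1σ2⁻¹, σ2, σ2). Then e1 and e2 are generating 4-systems of G, e1 and e2 are not simultaneously conjugate, applying β_{12} to e1 (resp. e2) yields a tuple simultaneously conjugate to e1 (resp. e2), and applying β_{13} or β_{14} to e1 yields a tuple simultaneously conjugate to e2 and conversely; in particular the set of simultaneous conjugacy classes {[e1],[e2]} is an orbit of length 2 under the maps β_{12}, β_{13}, β_{14}. -/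
open Braid in
/-- Theorem (orbits of length 2, case (a)): for `G` nontrivial with trivial
center, `G = ⟨σ₁, σ₂⟩`, `(σ₁σ₂)² = 1`, the classes of
`e₁ = (σ₁, σ₁, σ₂, σ₁σ₂σ₁⁻¹)` and `e₂ = (σ₁, σ₂σ₁σ₂⁻¹, σ₂, σ₂)` form an orbit of
length 2 under β₁₂, β₁₃, β₁₄: both are generating 4-systems, they are not
simultaneously conjugate, β₁₂ fixes each class, and β₁₃, β₁₄ swap them. -/
theorem statement6 {G : Type*} [Group G] [Nontrivial G]
    (hZ : Subgroup.center G = ⊥) (σ1 σ2 : G)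
    (hgen : Subgroup.closure {σ1, σ2} = ⊤) (h2 : (σ1 * σ2) ^ 2 = 1) :
    IsGenSys4 (σ1, σ1, σ2, σ1 * σ2 * σ1⁻¹) ∧
    IsGenSys4 (σ1, σ2 * σ1 * σ2⁻¹, σ2, σ2) ∧
    ¬ SimConj4 (σ1, σ1, σ2, σ1 * σ2 * σ1⁻¹) (σ1, σ2 * σ1 * σ2⁻¹, σ2, σ2) ∧
    SimConj4 (b12 (σ1, σ1, σ2, σ1 * σ2 * σ1⁻¹)) (σ1, σ1, σ2, σ1 * σ2 * σ1⁻¹) ∧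
    SimConj4 (b12 (σ1, σ2 * σ1 * σ2⁻¹, σ2, σ2)) (σ1, σ2 * σ1 * σ2⁻¹, σ2, σ2) ∧
    SimConj4 (b13 (σ1, σ1, σ2, σ1 * σ2 * σ1⁻¹)) (σ1, σ2 * σ1 * σ2⁻¹, σ2, σ2) ∧
    SimConj4 (b13 (σ1, σ2 * σ1 * σ2⁻¹, σ2, σ2)) (σ1, σ1, σ2, σ1 * σ2 * σ1⁻¹) ∧
    SimConj4 (b14 (σ1, σ1, σ2, σ1 * σ2 * σ1⁻¹)) (σ1, σ2 * σ1 * σ2⁻¹, σ2, σ2) ∧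
    SimConj4 (b14 (σ1, σ2 * σ1 * σ2⁻¹, σ2, σ2)) (σ1, σ1, σ2, σ1 * σ2 * σ1⁻¹) := by
  have hne : ¬ (σ2 * σ1 = σ1 * σ2) := by
    intro hcomm
    have hc : Commute σ1 σ2 := hcomm.symm
    have hcen : ∀ g ∈ Subgroup.closure ({σ1, σ2} : Set G),
        ∀ h ∈ Subgroup.closure ({σ1, σ2} : Set G), Commute g h := by
      intro g hg
      induction hg using Subgroup.closure_induction with
      | mem x hx =>
        intro h hh
        induction hh using Subgroup.closure_induction with
        | mem y hy =>
          rcases hx with rfl | rfl <;> rcases hy with rfl | rfl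
          exacts [Commute.refl _, hc, hc.symm, Commute.refl _]
        | one => exact Commute.one_right _
        | mul a b _ _ iha ihb => exact iha.mul_right ihb
        | inv a _ iha => exact iha.inv_right
      | one => exact fun h _ => Commute.one_left _
      | mul a b _ _ iha ihb =>
        exact fun h hh => (iha h hh).mul_left (ihb h hh)
      | inv a _ iha => exact fun h hh => (iha h hh).inv_left
    have hmem : ∀ x ∈ ({σ1, σ2} : Set G), x ∈ Subgroup.center G := by
      intro x hx
      rw [Subgroup.mem_center_iff]
      intro g
      exact hcen g (by rw [hgen]; trivial) x (Subgroup.subset_closure hx)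
    have hs1 : σ1 = 1 := by
      have := hmem σ1 (by simp); rwa [hZ, Subgroup.mem_bot] at this
    have hs2 : σ2 = 1 := by
      have := hmem σ2 (by simp); rwa [hZ, Subgroup.mem_bot] at this
    rw [hs1, hs2] at hgen
    obtain ⟨x, hx⟩ := exists_ne (1 : G)
    have hxm : x ∈ Subgroup.closure ({1, 1} : Set G) := by rw [hgen]; trivial
    simp only [Set.insert_eq_self, Set.mem_singleton_iff,
      Subgroup.closure_singleton_one, Subgroup.mem_bot, Set.pair_eq_singleton] at hxm
    exact hx hxm
  have hgen1 : Subgroup.closure {σ1, σ1, σ2, σ1 * σ2 * σ1⁻¹} = (⊤ : Subgroup G) := by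
    refine top_unique ?_
    rw [← hgen]
    exact Subgroup.closure_mono (by intro x hx; simp at hx ⊢; tauto)
  have hgen2 : Subgroup.closure {σ1, σ2 * σ1 * σ2⁻¹, σ2, σ2} = (⊤ : Subgroup G) := by
    refine top_unique ?_
    rw [← hgen]
    exact Subgroup.closure_mono (by intro x hx; simp at hx ⊢; tauto)
  obtain ⟨k, hsub, hkk, hk1, hki⟩ : ∃ k : G, σ2 = σ1⁻¹ * k ∧
      (∀ x : G, k * (k * x) = x) ∧ k * k = 1 ∧ k⁻¹ = k := by
    have hk : (σ1 * σ2) * (σ1 * σ2) = 1 := by rw [← sq]; exact h2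
    exact ⟨σ1 * σ2, by group, fun x => by rw [← mul_assoc, hk, one_mul], hk,
      inv_eq_of_mul_eq_one_right hk⟩
  subst hsub
  refine ⟨⟨by simp [mul_assoc, hkk, hk1, hki], hgen1⟩,
    ⟨by simp [mul_assoc, hkk, hk1, hki], hgen2⟩, ?_,
    ⟨1, by simp [b12, b2, mul_assoc, hkk, hk1, hki]⟩,
    ⟨(σ1⁻¹ * k)⁻¹ * (σ1⁻¹ * k)⁻¹, by simp [b12, b2, mul_assoc, hkk, hk1, hki]⟩,
    ⟨σ1 * (σ1⁻¹ * k)⁻¹, by simp [b13, b2, b3, b2i, mul_assoc, hkk, hk1, hki]⟩,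
    ⟨(σ1⁻¹ * k) * σ1⁻¹, by simp [b13, b2, b3, b2i, mul_assoc, hkk, hk1, hki]⟩,
    ⟨(σ1⁻¹ * k)⁻¹, by simp [b14, b2, b3, b4, b3i, b2i, mul_assoc, hkk, hk1, hki]⟩,
    ⟨σ1⁻¹ * k, by simp [b14, b2, b3, b4, b3i, b2i, mul_assoc, hkk, hk1, hki]⟩⟩
  rintro ⟨γ, hA, hB, hC, hD⟩
  dsimp only at hA hB hC hD
  have hγ1 : Commute γ σ1 := by
    unfold Commute SemiconjBy
    conv_lhs => rw [← hA]
    group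
  have hγ2 : Commute γ (σ1⁻¹ * k) := by
    unfold Commute SemiconjBy
    conv_lhs => rw [← hC]
    group
  have hcen : γ ∈ Subgroup.center G := by
    rw [Subgroup.mem_center_iff]
    intro g
    have hg : g ∈ Subgroup.closure ({σ1, σ1⁻¹ * k} : Set G) := by rw [hgen]; trivial
    have : Commute γ g := by
      induction hg using Subgroup.closure_induction with
      | mem x hx => rcases hx with rfl | rfl; exacts [hγ1, hγ2]
      | one => exact Commute.one_right _
      | mul a b _ _ iha ihb => exact iha.mul_right ihb
      | inv a _ iha => exact iha.inv_right
    exact this.symm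
  rw [hZ, Subgroup.mem_bot] at hcen
  subst hcen
  simp only [inv_one, one_mul, mul_one] at hB
  rw [eq_mul_inv_iff_mul_eq] at hB
  exact hne hB.symm
end

section
/- Let G be a nontrivial group with trivial center and σ1, σ2 ∈ G with G = ⟨σ1, σ2⟩ and (σ1σ2)² = 1. Set e3 = (σ1, σ2, σ1, σ2) and e4 = (σ1, σ2, σ2⁻¹σ1σ2, σ1σ2σ1⁻¹). Then e3 and e4 are generating 4-systems of G, e3 and e4 are not simultaneously conjugate, applying β_{13} to e3 (resp. e4) yields a tuple simultaneously conjugate to e3 (resp. e4), and applying β_{12} or β_{14} to e3 yields a tuple simultaneously conjugate to e4 and conversely; in particular the set of simultaneous conjugacy classes {[e3],[e4]} is an orbit of length 2 under the maps β_{12}, β_{13}, β_{14}. -/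
open Braid in
/-- Theorem (orbits of length 2, case (b)): for `G` nontrivial with trivial
center, `G = ⟨σ₁, σ₂⟩`, `(σ₁σ₂)² = 1`, the classes of `e₃ = (σ₁, σ₂, σ₁, σ₂)` and
`e₄ = (σ₁, σ₂, σ₂⁻¹σ₁σ₂, σ₁σ₂σ₁⁻¹)` form an orbit of length 2 under β₁₂, β₁₃,
β₁₄: both are generating 4-systems, they are not simultaneously conjugate, β₁₃
fixes each class, and β₁₂, β₁₄ swap them. -/
theorem statement7 {G : Type*} [Group G] [Nontrivial G]
    (hZ : Subgroup.center G = ⊥) (σ1 σ2 : G)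
    (hgen : Subgroup.closure {σ1, σ2} = ⊤) (h2 : (σ1 * σ2) ^ 2 = 1) :
    IsGenSys4 (σ1, σ2, σ1, σ2) ∧
    IsGenSys4 (σ1, σ2, σ2⁻¹ * σ1 * σ2, σ1 * σ2 * σ1⁻¹) ∧
    ¬ SimConj4 (σ1, σ2, σ1, σ2) (σ1, σ2, σ2⁻¹ * σ1 * σ2, σ1 * σ2 * σ1⁻¹) ∧
    SimConj4 (b13 (σ1, σ2, σ1, σ2)) (σ1, σ2, σ1, σ2) ∧
    SimConj4 (b13 (σ1, σ2, σ2⁻¹ * σ1 * σ2, σ1 * σ2 * σ1⁻¹))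
      (σ1, σ2, σ2⁻¹ * σ1 * σ2, σ1 * σ2 * σ1⁻¹) ∧
    SimConj4 (b12 (σ1, σ2, σ1, σ2)) (σ1, σ2, σ2⁻¹ * σ1 * σ2, σ1 * σ2 * σ1⁻¹) ∧
    SimConj4 (b12 (σ1, σ2, σ2⁻¹ * σ1 * σ2, σ1 * σ2 * σ1⁻¹)) (σ1, σ2, σ1, σ2) ∧
    SimConj4 (b14 (σ1, σ2, σ1, σ2)) (σ1, σ2, σ2⁻¹ * σ1 * σ2, σ1 * σ2 * σ1⁻¹) ∧
    SimConj4 (b14 (σ1, σ2, σ2⁻¹ * σ1 * σ2, σ1 * σ2 * σ1⁻¹)) (σ1, σ2, σ1, σ2) := by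
  have key : σ1 * σ2 * σ1 * σ2 = 1 := by
    have := h2; rw [pow_two] at this
    simpa [mul_assoc] using this
  have key2 : σ2 * σ1 * σ2 * σ1 = 1 := by
    have := congrArg (fun x => σ1⁻¹ * x * σ1) key
    simpa [mul_assoc] using this
  have w3 : σ1 * (σ2 * (σ1 * σ2)) = 1 := by simpa [mul_assoc] using key
  have w4 : σ2 * (σ1 * (σ2 * σ1)) = 1 := by simpa [mul_assoc] using key2
  have w1 : ∀ x : G, σ1 * (σ2 * (σ1 * (σ2 * x))) = x := by
    intro x
    calc σ1 * (σ2 * (σ1 * (σ2 * x))) = (σ1 * (σ2 * (σ1 * σ2))) * x := by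
          simp [mul_assoc]
      _ = x := by rw [w3, one_mul]
  have w2 : ∀ x : G, σ2 * (σ1 * (σ2 * (σ1 * x))) = x := by
    intro x
    calc σ2 * (σ1 * (σ2 * (σ1 * x))) = (σ2 * (σ1 * (σ2 * σ1))) * x := by
          simp [mul_assoc]
      _ = x := by rw [w4, one_mul]
  have i1 : σ1⁻¹ = σ2 * (σ1 * σ2) := inv_eq_of_mul_eq_one_right w3
  have i2 : σ2⁻¹ = σ1 * (σ2 * σ1) := inv_eq_of_mul_eq_one_right w4
  have hsub : ∀ s : Set G, {σ1, σ2} ⊆ s → Subgroup.closure s = ⊤ := by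
    intro s hs
    refine le_antisymm le_top ?_
    rw [← hgen]
    exact Subgroup.closure_mono hs
  have central : ∀ γ : G, σ1 * γ = γ * σ1 → σ2 * γ = γ * σ2 →
      γ ∈ Subgroup.center G := by
    intro γ c1 c2
    rw [Subgroup.mem_center_iff]
    intro g
    have hg : g ∈ Subgroup.closure ({σ1, σ2} : Set G) := by
      rw [hgen]; exact Subgroup.mem_top g
    induction hg using Subgroup.closure_induction with
    | mem x hx =>
      rcases hx with h | h
      · subst h; exact c1
      · simp only [Set.mem_singleton_iff] at h; subst h; exact c2
    | one => simp
    | mul x y _ _ hx hy =>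
      calc x * y * γ = x * (y * γ) := by rw [mul_assoc]
        _ = x * (γ * y) := by rw [hy]
        _ = (x * γ) * y := by rw [mul_assoc]
        _ = (γ * x) * y := by rw [hx]
        _ = γ * (x * y) := by rw [mul_assoc]
    | inv x _ hx =>
      have : γ * x = x * γ := hx.symm
      calc x⁻¹ * γ = x⁻¹ * γ * x * x⁻¹ := by group
        _ = x⁻¹ * (γ * x) * x⁻¹ := by rw [mul_assoc x⁻¹ γ x]
        _ = x⁻¹ * (x * γ) * x⁻¹ := by rw [this]
        _ = γ * x⁻¹ := by group
  refine ⟨⟨key, hsub _ ?_⟩, ⟨?_, hsub _ ?_⟩, ?_, ?_, ?_, ?_, ?_, ?_, ?_⟩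
  · intro x hx
    simp only [Set.mem_insert_iff, Set.mem_singleton_iff] at hx ⊢
    tauto
  · show σ1 * σ2 * (σ2⁻¹ * σ1 * σ2) * (σ1 * σ2 * σ1⁻¹) = 1
    simp [mul_assoc, mul_inv_rev, i1, i2, w1, w2, w3, w4]
  · intro x hx
    simp only [Set.mem_insert_iff, Set.mem_singleton_iff] at hx ⊢
    tauto
  · rintro ⟨γ, hc1, hc2, hc3, hc4⟩
    simp only at hc1 hc2 hc3 hc4
    have c1 : σ1 * γ = γ * σ1 := by
      have := congrArg (fun x => γ * x) hc1
      simpa [mul_assoc] using this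
    have c2 : σ2 * γ = γ * σ2 := by
      have := congrArg (fun x => γ * x) hc2
      simpa [mul_assoc] using this
    have hγ1 : γ = 1 := by
      have := central γ c1 c2
      rw [hZ, Subgroup.mem_bot] at this; exact this
    subst hγ1
    simp only [inv_one, one_mul, mul_one] at hc3
    have comm : σ1 * σ2 = σ2 * σ1 := by
      calc σ1 * σ2 = σ2 * (σ2⁻¹ * σ1 * σ2) := by simp [mul_assoc]
        _ = σ2 * σ1 := by rw [← hc3]
    have hσ1 : σ1 = 1 := by
      have := central σ1 rfl comm.symm
      rw [hZ, Subgroup.mem_bot] at this; exact this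
    have hσ2 : σ2 = 1 := by
      have := central σ2 comm rfl
      rw [hZ, Subgroup.mem_bot] at this; exact this
    obtain ⟨x, hx⟩ := exists_ne (1 : G)
    apply hx
    have hxmem : x ∈ Subgroup.closure ({σ1, σ2} : Set G) := by
      rw [hgen]; exact Subgroup.mem_top x
    rw [hσ1, hσ2] at hxmem
    simpa using (Subgroup.closure_le (⊥ : Subgroup G)).2 (by simp) hxmem
  · refine ⟨σ2⁻¹ * σ2⁻¹, ?_, ?_, ?_, ?_⟩ <;>
      simp [b13, b2, b3, b2i, mul_assoc, mul_inv_rev, i1, i2, w1, w2, w3, w4]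
  · refine ⟨1, ?_, ?_, ?_, ?_⟩ <;>
      simp [b13, b2, b3, b2i, mul_assoc, mul_inv_rev, i1, i2, w1, w2, w3, w4]
  · refine ⟨σ1 * σ2, ?_, ?_, ?_, ?_⟩ <;>
      simp [b12, b2, mul_assoc, mul_inv_rev, i1, i2, w1, w2, w3, w4]
  · refine ⟨σ1 * σ2, ?_, ?_, ?_, ?_⟩ <;>
      simp [b12, b2, mul_assoc, mul_inv_rev, i1, i2, w1, w2, w3, w4]
  · refine ⟨σ2, ?_, ?_, ?_, ?_⟩ <;>
      simp [b14, b2, b3, b4, b2i, b3i, mul_assoc, mul_inv_rev, i1, i2, w1, w2, w3, w4]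
  · refine ⟨σ2⁻¹, ?_, ?_, ?_, ?_⟩ <;>
      simp [b14, b2, b3, b4, b2i, b3i, mul_assoc, mul_inv_rev, i1, i2, w1, w2, w3, w4]
end

section
/- Let G be a nontrivial group with trivial center and σ1, σ2 ∈ G with G = ⟨σ1, σ2⟩, (σ1σ2)² = 1, and σ2 conjugate to σ1 in G. Define the six 4-tuples e1 = (σ1, σ1, σ2, σ1σ2σ1⁻¹), e2 = (σ1, σ2σ1σ2⁻¹, σ2, σ2), e3 = (σ1, σ2, σ1, σ2), e4 = (σ1, σ2, σ2⁻¹σ1σ2, σ1σ2σ1⁻¹), e5 = (σ1, σ2, σ2, σ2⁻¹σ1σ2), e6 = (σ1, σ2, σ1σ2σ1⁻¹, σ1). Then e1,…,e6 are pairwise not simultaneously conjugate, and on the six simultaneous conjugacy classes [e1],…,[e6]: the map β_3 induces the permutation (1,3,2,4)(5)(6) (i.e. [e1]↦[e3], [e3]↦[e2], [e2]↦[e4], [e4]↦[e1], fixing [e5],[e6]); the map η_{23} induces (1,4)(2,3)(5,6); and the map η_{234} induces (1,6,4)(2,5,3). In particular {[e1],…,[e6]} is a single orbit of length 6 under the group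 generated by these maps, and the permutation group of the six classes generated by β_3, η_{23}, η_{234} is isomorphic to the symmetric group S_4. -/
namespace Braid

variable {G : Type*} [Group G]

/-- The topological automorphism η₂₃:
`(σ₁,σ₂,σ₃,σ₄) ↦ (σ₂⁻¹σ₁σ₂, σ₃, σ₄σ₂σ₄⁻¹, σ₄)`. -/
def eta23 (σ : G × G × G × G) : G × G × G × G :=
  (σ.2.1⁻¹ * σ.1 * σ.2.1, σ.2.2.1, σ.2.2.2 * σ.2.1 * σ.2.2.2⁻¹, σ.2.2.2)

/-- The topological automorphism η₂₃₄:
`(σ₁,σ₂,σ₃,σ₄) ↦ (σ₁, σ₂σ₃σ₂⁻¹, σ₂σ₄σ₂⁻¹, σ₂)`. -/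
def eta234 (σ : G × G × G × G) : G × G × G × G :=
  (σ.1, σ.2.1 * σ.2.2.1 * σ.2.1⁻¹, σ.2.1 * σ.2.2.2 * σ.2.1⁻¹, σ.2.1)

end Braid

namespace BraidAux

open Equiv

def r4 : Perm (Fin 4) := c[0, 1, 2, 3]

def reps : Fin 6 → Perm (Fin 4) :=
  ![1, Equiv.swap 1 3, Equiv.swap 2 3, c[1, 2, 3], Equiv.swap 1 2, c[1, 3, 2]]

def CL : List (Perm (Fin 4)) := [1, r4, r4 ^ 2, r4 ^ 3]

def cosetIdx (h : Perm (Fin 4)) : Fin 6 :=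
  if (reps 0)⁻¹ * h ∈ CL then 0 else if (reps 1)⁻¹ * h ∈ CL then 1
  else if (reps 2)⁻¹ * h ∈ CL then 2 else if (reps 3)⁻¹ * h ∈ CL then 3
  else if (reps 4)⁻¹ * h ∈ CL then 4 else 5

def pact (g : Perm (Fin 4)) (i : Fin 6) : Fin 6 := cosetIdx (g * reps i)

theorem pact_one : ∀ i, pact 1 i = i := by decide

theorem uniq2 : ∀ i j : Fin 6, ∀ a b : Fin 4,
    reps i * r4 ^ (a : ℕ) = reps j * r4 ^ (b : ℕ) → i = j := by decide

theorem char2 : ∀ x : Perm (Fin 4), ∃ a : Fin 4, x = reps (cosetIdx x) * r4 ^ (a : ℕ) := by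
  decide

theorem r4_pow_add : ∀ a b : Fin 4, r4 ^ (a : ℕ) * r4 ^ (b : ℕ) = r4 ^ ((a + b : Fin 4) : ℕ) := by
  decide

theorem pact_faithful : ∀ g : Perm (Fin 4), (∀ i, pact g i = i) → g = 1 := by decide

theorem eq_of_rep (x : Perm (Fin 4)) (i : Fin 6) (a : Fin 4) (h : x = reps i * r4 ^ (a : ℕ)) :
    cosetIdx x = i := by
  obtain ⟨b, hb⟩ := char2 x
  exact uniq2 _ i b a (hb.symm.trans h)

theorem pact_mul (g h : Perm (Fin 4)) (i : Fin 6) : pact (g * h) i = pact g (pact h i) := by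
  show cosetIdx (g * h * reps i) = cosetIdx (g * reps (cosetIdx (h * reps i)))
  set k := cosetIdx (h * reps i) with hk
  obtain ⟨a, ha⟩ := char2 (h * reps i)
  rw [← hk] at ha
  set m := cosetIdx (g * reps k) with hm
  obtain ⟨b, hb⟩ := char2 (g * reps k)
  rw [← hm] at hb
  refine eq_of_rep _ _ (b + a) ?_
  rw [← r4_pow_add, show g * h * reps i = g * (h * reps i) by group, ha,
    show g * (reps k * r4 ^ (a : ℕ)) = g * reps k * r4 ^ (a : ℕ) by group, hb]
  group

def phiHom : Perm (Fin 4) →* Perm (Fin 6) where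
  toFun g := ⟨pact g, pact g⁻¹,
    fun i => by rw [← pact_mul, inv_mul_cancel, pact_one],
    fun i => by rw [← pact_mul, mul_inv_cancel, pact_one]⟩
  map_one' := Equiv.ext pact_one
  map_mul' g h := Equiv.ext fun i => pact_mul g h i

theorem phi_inj : Function.Injective phiHom := by
  rw [injective_iff_map_eq_one]
  intro g hg
  exact pact_faithful g fun i => Equiv.ext_iff.1 hg i

theorem phi_range : phiHom.range = Subgroup.closure
    {(c[0, 2, 1, 3] : Perm (Fin 6)), c[0, 3] * c[1, 2] * c[4, 5], c[0, 5, 3] * c[1, 4, 2]} := by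
  have hcyc : (c[0, 1, 2, 3] : Perm (Fin 4)).IsCycle := Cycle.isCycle_formPerm _ _ ((Cycle.nontrivial_coe_nodup_iff (by decide)).2 (by decide))
  have hsupp : (c[0, 1, 2, 3] : Perm (Fin 4)).support = Finset.univ := by decide
  have htop := Equiv.Perm.closure_cycle_adjacent_swap hcyc hsupp 0
  rw [show (c[0, 1, 2, 3] : Perm (Fin 4)) 0 = 1 by decide] at htop
  apply le_antisymm
  · rw [MonoidHom.range_eq_map, ← htop, MonoidHom.map_closure]
    refine (Subgroup.closure_le _).2 ?_
    rintro x hx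
    simp only [Set.image_insert_eq, Set.image_singleton, Set.mem_insert_iff,
      Set.mem_singleton_iff] at hx
    rcases hx with rfl | rfl
    · rw [SetLike.mem_coe,
        show phiHom (c[0, 1, 2, 3] : Perm (Fin 4))
          = (c[0, 3] * c[1, 2] * c[4, 5] : Perm (Fin 6))
            * (c[0, 5, 3] * c[1, 4, 2]) * (c[0, 5, 3] * c[1, 4, 2]) from Equiv.ext (by decide)]
      exact mul_mem (mul_mem
        (Subgroup.subset_closure (Set.mem_insert_of_mem _ (Set.mem_insert _ _)))
        (Subgroup.subset_closure (Set.mem_insert_of_mem _ (Set.mem_insert_of_mem _ rfl))))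
        (Subgroup.subset_closure (Set.mem_insert_of_mem _ (Set.mem_insert_of_mem _ rfl)))
    · rw [SetLike.mem_coe,
        show phiHom (Equiv.swap 0 1)
          = (c[0, 3] * c[1, 2] * c[4, 5] : Perm (Fin 6)) from Equiv.ext (by decide)]
      exact Subgroup.subset_closure (Set.mem_insert_of_mem _ (Set.mem_insert _ _))
  · rw [Subgroup.closure_le]
    rintro x hx
    simp only [Set.mem_insert_iff, Set.mem_singleton_iff] at hx
    rw [SetLike.mem_coe, MonoidHom.mem_range]
    rcases hx with rfl | rfl | rfl
    · exact ⟨c[0, 3, 1, 2], Equiv.ext (by decide)⟩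
    · exact ⟨Equiv.swap 0 1, Equiv.ext (by decide)⟩
    · exact ⟨c[1, 3, 2], Equiv.ext (by decide)⟩

theorem S4aux : Nonempty
    ((Subgroup.closure {(c[0, 2, 1, 3] : Perm (Fin 6)), c[0, 3] * c[1, 2] * c[4, 5],
        c[0, 5, 3] * c[1, 4, 2]} : Subgroup (Perm (Fin 6))) ≃* Perm (Fin 4)) :=
  ⟨(MulEquiv.subgroupCongr phi_range.symm).trans (MonoidHom.ofInjective phi_inj).symm⟩

end BraidAux

open Braid in
/-- Theorem (orbit of length 6): with `G = ⟨σ₁,σ₂⟩` nontrivial, trivial center,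
`(σ₁σ₂)² = 1` and `σ₂` conjugate to `σ₁`, the six tuples `e₁,…,e₆` have pairwise
distinct simultaneous conjugacy classes, on which β₃ induces the permutation
`(1,3,2,4)`, η₂₃ induces `(1,4)(2,3)(5,6)`, η₂₃₄ induces `(1,6,4)(2,5,3)`
(0-indexed here), and the permutation group generated by these three
permutations is isomorphic to `S₄`. -/
theorem statement8 {G : Type*} [Group G] [Nontrivial G]
    (hZ : Subgroup.center G = ⊥) (σ1 σ2 : G)
    (hgen : Subgroup.closure {σ1, σ2} = ⊤) (h2 : (σ1 * σ2) ^ 2 = 1)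
    (hconj : IsConj σ1 σ2)
    (e : Fin 6 → G × G × G × G)
    (he : e = ![(σ1, σ1, σ2, σ1 * σ2 * σ1⁻¹),
                (σ1, σ2 * σ1 * σ2⁻¹, σ2, σ2),
                (σ1, σ2, σ1, σ2),
                (σ1, σ2, σ2⁻¹ * σ1 * σ2, σ1 * σ2 * σ1⁻¹),
                (σ1, σ2, σ2, σ2⁻¹ * σ1 * σ2),
                (σ1, σ2, σ1 * σ2 * σ1⁻¹, σ1)])
    (p3 p23 p234 : Equiv.Perm (Fin 6))
    (hp3 : p3 = c[0, 2, 1, 3])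
    (hp23 : p23 = c[0, 3] * c[1, 2] * c[4, 5])
    (hp234 : p234 = c[0, 5, 3] * c[1, 4, 2]) :
    (∀ i j : Fin 6, i ≠ j → ¬ SimConj4 (e i) (e j)) ∧
    (∀ i, SimConj4 (b3 (e i)) (e (p3 i))) ∧
    (∀ i, SimConj4 (eta23 (e i)) (e (p23 i))) ∧
    (∀ i, SimConj4 (eta234 (e i)) (e (p234 i))) ∧
    Nonempty ((Subgroup.closure {p3, p23, p234} : Subgroup (Equiv.Perm (Fin 6)))
      ≃* Equiv.Perm (Fin 4)) := by
  subst he hp3 hp23 hp234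
  obtain ⟨u, hu, hσ2⟩ : ∃ u : G, u * u = 1 ∧ σ2 = σ1⁻¹ * u :=
    ⟨σ1 * σ2, by rw [← pow_two]; exact h2, by group⟩
  have hui : u⁻¹ = u := inv_eq_of_mul_eq_one_right hu
  have hu2 : ∀ x : G, u * (u * x) = x := fun x => by rw [← mul_assoc, hu, one_mul]
  have hγ : ∀ γ : G, γ * σ1 = σ1 * γ → γ * σ2 = σ2 * γ → γ = 1 := by
    intro γ hc1 hc2
    have hle : Subgroup.closure {σ1, σ2} ≤ Subgroup.centralizer {γ} := by
      rw [Subgroup.closure_le]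
      intro x hx
      simp only [Set.mem_insert_iff, Set.mem_singleton_iff] at hx
      rcases hx with rfl | rfl
      · exact Subgroup.mem_centralizer_iff.2 fun g hg => by
          rw [Set.mem_singleton_iff] at hg; rw [hg]; exact hc1
      · exact Subgroup.mem_centralizer_iff.2 fun g hg => by
          rw [Set.mem_singleton_iff] at hg; rw [hg]; exact hc2
    have hcen : γ ∈ Subgroup.center G := by
      rw [Subgroup.mem_center_iff]
      intro g
      have hg : g ∈ Subgroup.centralizer {γ} := hle (by rw [hgen]; exact Subgroup.mem_top g)
      exact (Subgroup.mem_centralizer_iff.1 hg γ rfl).symm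
    rw [hZ] at hcen
    exact Subgroup.mem_bot.1 hcen
  have hγ1 : ∀ γ : G, γ⁻¹ * σ1 * γ = σ1 → γ⁻¹ * σ2 * γ = σ2 → γ = 1 := by
    intro γ a b
    rw [mul_assoc, inv_mul_eq_iff_eq_mul] at a b
    exact hγ γ a.symm b.symm
  have habs : σ1 * σ2 = σ2 * σ1 → False := by
    intro hc
    have hs1 : σ1 = 1 := hγ σ1 rfl hc
    have hs2 : σ2 = 1 := hγ σ2 hc.symm rfl
    rw [hs1, hs2, Set.pair_eq_singleton, Subgroup.closure_singleton_one] at hgen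
    obtain ⟨g, hg1⟩ := exists_ne (1 : G)
    exact hg1 (Subgroup.mem_bot.1 (by rw [hgen]; exact Subgroup.mem_top g))
  have hne : σ1 = σ2 → False := fun h => habs (by rw [h])
  have key24 : σ2⁻¹ * σ1 * σ2 = σ1 * σ2 * σ1⁻¹ → σ1 * σ2 = σ2 * σ1 := by
    intro h
    simp only [Braid.b3, Braid.eta23, Braid.eta234, hσ2, mul_assoc, mul_inv_rev, inv_inv,
      inv_one, one_mul, mul_one, hui, inv_mul_cancel_left, mul_inv_cancel_left,
      inv_mul_cancel, mul_inv_cancel, hu2, hu] at h ⊢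
    have h' := mul_left_cancel h
    have h2' : u = σ1⁻¹ * σ1⁻¹ := by
      calc u = σ1⁻¹ * (σ1 * u) := by group
      _ = σ1⁻¹ * σ1⁻¹ := by rw [h']
    rw [h2']
    group
  have K12 : ∀ γ : G, γ⁻¹ * σ1 * γ = σ1 → γ⁻¹ * (σ1) * γ = σ2 * σ1 * σ2⁻¹ → γ⁻¹ * (σ2) * γ = σ2 → γ⁻¹ * (σ1 * σ2 * σ1⁻¹) * γ = σ2 → False := by
    intro γ a1 a2 _ _
    have hh := a1.symm.trans a2
    refine habs ?_
    conv_lhs => rw [hh]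
    group
  have K13 : ∀ γ : G, γ⁻¹ * σ1 * γ = σ1 → γ⁻¹ * (σ1) * γ = σ2 → γ⁻¹ * (σ2) * γ = σ1 → γ⁻¹ * (σ1 * σ2 * σ1⁻¹) * γ = σ2 → False := by
    intro γ a1 a2 _ _
    exact hne (a1.symm.trans a2)
  have K14 : ∀ γ : G, γ⁻¹ * σ1 * γ = σ1 → γ⁻¹ * (σ1) * γ = σ2 → γ⁻¹ * (σ2) * γ = σ2⁻¹ * σ1 * σ2 → γ⁻¹ * (σ1 * σ2 * σ1⁻¹) * γ = σ1 * σ2 * σ1⁻¹ → False := by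
    intro γ a1 a2 _ _
    exact hne (a1.symm.trans a2)
  have K15 : ∀ γ : G, γ⁻¹ * σ1 * γ = σ1 → γ⁻¹ * (σ1) * γ = σ2 → γ⁻¹ * (σ2) * γ = σ2 → γ⁻¹ * (σ1 * σ2 * σ1⁻¹) * γ = σ2⁻¹ * σ1 * σ2 → False := by
    intro γ a1 a2 _ _
    exact hne (a1.symm.trans a2)
  have K16 : ∀ γ : G, γ⁻¹ * σ1 * γ = σ1 → γ⁻¹ * (σ1) * γ = σ2 → γ⁻¹ * (σ2) * γ = σ1 * σ2 * σ1⁻¹ → γ⁻¹ * (σ1 * σ2 * σ1⁻¹) * γ = σ1 → False := by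
    intro γ a1 a2 _ _
    exact hne (a1.symm.trans a2)
  have K23 : ∀ γ : G, γ⁻¹ * σ1 * γ = σ1 → γ⁻¹ * (σ2 * σ1 * σ2⁻¹) * γ = σ2 → γ⁻¹ * (σ2) * γ = σ1 → γ⁻¹ * (σ2) * γ = σ2 → False := by
    intro γ _ _ a3 a4
    exact hne (a3.symm.trans a4)
  have K24 : ∀ γ : G, γ⁻¹ * σ1 * γ = σ1 → γ⁻¹ * (σ2 * σ1 * σ2⁻¹) * γ = σ2 → γ⁻¹ * (σ2) * γ = σ2⁻¹ * σ1 * σ2 → γ⁻¹ * (σ2) * γ = σ1 * σ2 * σ1⁻¹ → False := by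
    intro γ _ _ a3 a4
    exact habs (key24 (a3.symm.trans a4))
  have K25 : ∀ γ : G, γ⁻¹ * σ1 * γ = σ1 → γ⁻¹ * (σ2 * σ1 * σ2⁻¹) * γ = σ2 → γ⁻¹ * (σ2) * γ = σ2 → γ⁻¹ * (σ2) * γ = σ2⁻¹ * σ1 * σ2 → False := by
    intro γ _ _ a3 a4
    have hh := a3.symm.trans a4
    refine hne (mul_right_cancel (b := σ2) ?_)
    nth_rewrite 3 [hh]
    group
  have K26 : ∀ γ : G, γ⁻¹ * σ1 * γ = σ1 → γ⁻¹ * (σ2 * σ1 * σ2⁻¹) * γ = σ2 → γ⁻¹ * (σ2) * γ = σ1 * σ2 * σ1⁻¹ → γ⁻¹ * (σ2) * γ = σ1 → False := by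
    intro γ _ _ a3 a4
    have hh := a3.symm.trans a4
    refine hne (Eq.symm (mul_left_cancel (a := σ1) ?_))
    nth_rewrite 2 [← hh]
    group
  have K34 : ∀ γ : G, γ⁻¹ * σ1 * γ = σ1 → γ⁻¹ * (σ2) * γ = σ2 → γ⁻¹ * (σ1) * γ = σ2⁻¹ * σ1 * σ2 → γ⁻¹ * (σ2) * γ = σ1 * σ2 * σ1⁻¹ → False := by
    intro γ a1 a2 a3 _
    obtain rfl := hγ1 γ a1 a2
    rw [inv_one, one_mul, mul_one] at a3
    refine habs ?_
    nth_rewrite 2 [a3]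
    group
  have K35 : ∀ γ : G, γ⁻¹ * σ1 * γ = σ1 → γ⁻¹ * (σ2) * γ = σ2 → γ⁻¹ * (σ1) * γ = σ2 → γ⁻¹ * (σ2) * γ = σ2⁻¹ * σ1 * σ2 → False := by
    intro γ a1 a2 a3 _
    obtain rfl := hγ1 γ a1 a2
    rw [inv_one, one_mul, mul_one] at a3
    exact hne a3
  have K36 : ∀ γ : G, γ⁻¹ * σ1 * γ = σ1 → γ⁻¹ * (σ2) * γ = σ2 → γ⁻¹ * (σ1) * γ = σ1 * σ2 * σ1⁻¹ → γ⁻¹ * (σ2) * γ = σ1 → False := by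
    intro γ a1 a2 a3 _
    obtain rfl := hγ1 γ a1 a2
    rw [inv_one, one_mul, mul_one] at a3
    refine hne (Eq.symm (mul_left_cancel (a := σ1) ?_))
    nth_rewrite 2 [a3]
    group
  have K45 : ∀ γ : G, γ⁻¹ * σ1 * γ = σ1 → γ⁻¹ * (σ2) * γ = σ2 → γ⁻¹ * (σ2⁻¹ * σ1 * σ2) * γ = σ2 → γ⁻¹ * (σ1 * σ2 * σ1⁻¹) * γ = σ2⁻¹ * σ1 * σ2 → False := by
    intro γ a1 a2 a3 _
    obtain rfl := hγ1 γ a1 a2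
    rw [inv_one, one_mul, mul_one] at a3
    refine hne (mul_right_cancel (b := σ2) ?_)
    nth_rewrite 3 [← a3]
    group
  have K46 : ∀ γ : G, γ⁻¹ * σ1 * γ = σ1 → γ⁻¹ * (σ2) * γ = σ2 → γ⁻¹ * (σ2⁻¹ * σ1 * σ2) * γ = σ1 * σ2 * σ1⁻¹ → γ⁻¹ * (σ1 * σ2 * σ1⁻¹) * γ = σ1 → False := by
    intro γ a1 a2 a3 _
    obtain rfl := hγ1 γ a1 a2
    rw [inv_one, one_mul, mul_one] at a3
    exact habs (key24 a3)
  have K56 : ∀ γ : G, γ⁻¹ * σ1 * γ = σ1 → γ⁻¹ * (σ2) * γ = σ2 → γ⁻¹ * (σ2) * γ = σ1 * σ2 * σ1⁻¹ → γ⁻¹ * (σ2⁻¹ * σ1 * σ2) * γ = σ1 → False := by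
    intro γ a1 a2 a3 _
    obtain rfl := hγ1 γ a1 a2
    rw [inv_one, one_mul, mul_one] at a3
    refine habs ?_
    nth_rewrite 2 [a3]
    group
  have hsymm : ∀ x y : G × G × G × G, SimConj4 x y → SimConj4 y x := by
    rintro x y ⟨γ, a1, a2, a3, a4⟩
    exact ⟨γ⁻¹, by rw [← a1]; group, by rw [← a2]; group,
      by rw [← a3]; group, by rw [← a4]; group⟩
  refine ⟨?_, ?_, ?_, ?_, ?_⟩
  · intro i j hij hs
    fin_cases i <;> fin_cases j
    · exact hij rfl
    · obtain ⟨γ, a1, a2, a3, a4⟩ := hs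
      exact K12 γ a1 a2 a3 a4
    · obtain ⟨γ, a1, a2, a3, a4⟩ := hs
      exact K13 γ a1 a2 a3 a4
    · obtain ⟨γ, a1, a2, a3, a4⟩ := hs
      exact K14 γ a1 a2 a3 a4
    · obtain ⟨γ, a1, a2, a3, a4⟩ := hs
      exact K15 γ a1 a2 a3 a4
    · obtain ⟨γ, a1, a2, a3, a4⟩ := hs
      exact K16 γ a1 a2 a3 a4
    · obtain ⟨γ, a1, a2, a3, a4⟩ := hsymm _ _ hs
      exact K12 γ a1 a2 a3 a4
    · exact hij rfl
    · obtain ⟨γ, a1, a2, a3, a4⟩ := hs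
      exact K23 γ a1 a2 a3 a4
    · obtain ⟨γ, a1, a2, a3, a4⟩ := hs
      exact K24 γ a1 a2 a3 a4
    · obtain ⟨γ, a1, a2, a3, a4⟩ := hs
      exact K25 γ a1 a2 a3 a4
    · obtain ⟨γ, a1, a2, a3, a4⟩ := hs
      exact K26 γ a1 a2 a3 a4
    · obtain ⟨γ, a1, a2, a3, a4⟩ := hsymm _ _ hs
      exact K13 γ a1 a2 a3 a4
    · obtain ⟨γ, a1, a2, a3, a4⟩ := hsymm _ _ hs
      exact K23 γ a1 a2 a3 a4
    · exact hij rfl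
    · obtain ⟨γ, a1, a2, a3, a4⟩ := hs
      exact K34 γ a1 a2 a3 a4
    · obtain ⟨γ, a1, a2, a3, a4⟩ := hs
      exact K35 γ a1 a2 a3 a4
    · obtain ⟨γ, a1, a2, a3, a4⟩ := hs
      exact K36 γ a1 a2 a3 a4
    · obtain ⟨γ, a1, a2, a3, a4⟩ := hsymm _ _ hs
      exact K14 γ a1 a2 a3 a4
    · obtain ⟨γ, a1, a2, a3, a4⟩ := hsymm _ _ hs
      exact K24 γ a1 a2 a3 a4
    · obtain ⟨γ, a1, a2, a3, a4⟩ := hsymm _ _ hs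
      exact K34 γ a1 a2 a3 a4
    · exact hij rfl
    · obtain ⟨γ, a1, a2, a3, a4⟩ := hs
      exact K45 γ a1 a2 a3 a4
    · obtain ⟨γ, a1, a2, a3, a4⟩ := hs
      exact K46 γ a1 a2 a3 a4
    · obtain ⟨γ, a1, a2, a3, a4⟩ := hsymm _ _ hs
      exact K15 γ a1 a2 a3 a4
    · obtain ⟨γ, a1, a2, a3, a4⟩ := hsymm _ _ hs
      exact K25 γ a1 a2 a3 a4
    · obtain ⟨γ, a1, a2, a3, a4⟩ := hsymm _ _ hs
      exact K35 γ a1 a2 a3 a4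
    · obtain ⟨γ, a1, a2, a3, a4⟩ := hsymm _ _ hs
      exact K45 γ a1 a2 a3 a4
    · exact hij rfl
    · obtain ⟨γ, a1, a2, a3, a4⟩ := hs
      exact K56 γ a1 a2 a3 a4
    · obtain ⟨γ, a1, a2, a3, a4⟩ := hsymm _ _ hs
      exact K16 γ a1 a2 a3 a4
    · obtain ⟨γ, a1, a2, a3, a4⟩ := hsymm _ _ hs
      exact K26 γ a1 a2 a3 a4
    · obtain ⟨γ, a1, a2, a3, a4⟩ := hsymm _ _ hs
      exact K36 γ a1 a2 a3 a4
    · obtain ⟨γ, a1, a2, a3, a4⟩ := hsymm _ _ hs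
      exact K46 γ a1 a2 a3 a4
    · obtain ⟨γ, a1, a2, a3, a4⟩ := hsymm _ _ hs
      exact K56 γ a1 a2 a3 a4
    · exact hij rfl
  · intro i
    fin_cases i
    · show SimConj4 (b3 (σ1, σ1, σ2, σ1 * σ2 * σ1⁻¹)) ((σ1, σ2, σ1, σ2))
      refine ⟨σ1, ?_, ?_, ?_, ?_⟩ <;>
      simp only [Braid.b3, Braid.eta23, Braid.eta234, hσ2, mul_assoc, mul_inv_rev, inv_inv,
        inv_one, one_mul, mul_one, hui, inv_mul_cancel_left, mul_inv_cancel_left,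
        inv_mul_cancel, mul_inv_cancel, hu2, hu]
    · show SimConj4 (b3 (σ1, σ2 * σ1 * σ2⁻¹, σ2, σ2)) ((σ1, σ2, σ2⁻¹ * σ1 * σ2, σ1 * σ2 * σ1⁻¹))
      refine ⟨σ1⁻¹, ?_, ?_, ?_, ?_⟩ <;>
      simp only [Braid.b3, Braid.eta23, Braid.eta234, hσ2, mul_assoc, mul_inv_rev, inv_inv,
        inv_one, one_mul, mul_one, hui, inv_mul_cancel_left, mul_inv_cancel_left,
        inv_mul_cancel, mul_inv_cancel, hu2, hu]
    · show SimConj4 (b3 (σ1, σ2, σ1, σ2)) ((σ1, σ2 * σ1 * σ2⁻¹, σ2, σ2))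
      refine ⟨(1:G), ?_, ?_, ?_, ?_⟩ <;>
      simp only [Braid.b3, Braid.eta23, Braid.eta234, hσ2, mul_assoc, mul_inv_rev, inv_inv,
        inv_one, one_mul, mul_one, hui, inv_mul_cancel_left, mul_inv_cancel_left,
        inv_mul_cancel, mul_inv_cancel, hu2, hu]
    · show SimConj4 (b3 (σ1, σ2, σ2⁻¹ * σ1 * σ2, σ1 * σ2 * σ1⁻¹)) ((σ1, σ1, σ2, σ1 * σ2 * σ1⁻¹))
      refine ⟨(1:G), ?_, ?_, ?_, ?_⟩ <;>
      simp only [Braid.b3, Braid.eta23, Braid.eta234, hσ2, mul_assoc, mul_inv_rev, inv_inv,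
        inv_one, one_mul, mul_one, hui, inv_mul_cancel_left, mul_inv_cancel_left,
        inv_mul_cancel, mul_inv_cancel, hu2, hu]
    · show SimConj4 (b3 (σ1, σ2, σ2, σ2⁻¹ * σ1 * σ2)) ((σ1, σ2, σ2, σ2⁻¹ * σ1 * σ2))
      refine ⟨(1:G), ?_, ?_, ?_, ?_⟩ <;>
      simp only [Braid.b3, Braid.eta23, Braid.eta234, hσ2, mul_assoc, mul_inv_rev, inv_inv,
        inv_one, one_mul, mul_one, hui, inv_mul_cancel_left, mul_inv_cancel_left,
        inv_mul_cancel, mul_inv_cancel, hu2, hu]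
    · show SimConj4 (b3 (σ1, σ2, σ1 * σ2 * σ1⁻¹, σ1)) ((σ1, σ2, σ1 * σ2 * σ1⁻¹, σ1))
      refine ⟨σ1⁻¹, ?_, ?_, ?_, ?_⟩ <;>
      simp only [Braid.b3, Braid.eta23, Braid.eta234, hσ2, mul_assoc, mul_inv_rev, inv_inv,
        inv_one, one_mul, mul_one, hui, inv_mul_cancel_left, mul_inv_cancel_left,
        inv_mul_cancel, mul_inv_cancel, hu2, hu]
  · intro i
    fin_cases i
    · show SimConj4 (eta23 (σ1, σ1, σ2, σ1 * σ2 * σ1⁻¹)) ((σ1, σ2, σ2⁻¹ * σ1 * σ2, σ1 * σ2 * σ1⁻¹))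
      refine ⟨(1:G), ?_, ?_, ?_, ?_⟩ <;>
      simp only [Braid.b3, Braid.eta23, Braid.eta234, hσ2, mul_assoc, mul_inv_rev, inv_inv,
        inv_one, one_mul, mul_one, hui, inv_mul_cancel_left, mul_inv_cancel_left,
        inv_mul_cancel, mul_inv_cancel, hu2, hu]
    · show SimConj4 (eta23 (σ1, σ2 * σ1 * σ2⁻¹, σ2, σ2)) ((σ1, σ2, σ1, σ2))
      refine ⟨σ2 * σ2, ?_, ?_, ?_, ?_⟩ <;>
      simp only [Braid.b3, Braid.eta23, Braid.eta234, hσ2, mul_assoc, mul_inv_rev, inv_inv,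
        inv_one, one_mul, mul_one, hui, inv_mul_cancel_left, mul_inv_cancel_left,
        inv_mul_cancel, mul_inv_cancel, hu2, hu]
    · show SimConj4 (eta23 (σ1, σ2, σ1, σ2)) ((σ1, σ2 * σ1 * σ2⁻¹, σ2, σ2))
      refine ⟨σ1 * σ2 * σ1, ?_, ?_, ?_, ?_⟩ <;>
      simp only [Braid.b3, Braid.eta23, Braid.eta234, hσ2, mul_assoc, mul_inv_rev, inv_inv,
        inv_one, one_mul, mul_one, hui, inv_mul_cancel_left, mul_inv_cancel_left,
        inv_mul_cancel, mul_inv_cancel, hu2, hu]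
    · show SimConj4 (eta23 (σ1, σ2, σ2⁻¹ * σ1 * σ2, σ1 * σ2 * σ1⁻¹)) ((σ1, σ1, σ2, σ1 * σ2 * σ1⁻¹))
      refine ⟨σ1 * σ2 * σ1⁻¹, ?_, ?_, ?_, ?_⟩ <;>
      simp only [Braid.b3, Braid.eta23, Braid.eta234, hσ2, mul_assoc, mul_inv_rev, inv_inv,
        inv_one, one_mul, mul_one, hui, inv_mul_cancel_left, mul_inv_cancel_left,
        inv_mul_cancel, mul_inv_cancel, hu2, hu]
    · show SimConj4 (eta23 (σ1, σ2, σ2, σ2⁻¹ * σ1 * σ2)) ((σ1, σ2, σ1 * σ2 * σ1⁻¹, σ1))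
      refine ⟨σ1 * σ2 * σ1, ?_, ?_, ?_, ?_⟩ <;>
      simp only [Braid.b3, Braid.eta23, Braid.eta234, hσ2, mul_assoc, mul_inv_rev, inv_inv,
        inv_one, one_mul, mul_one, hui, inv_mul_cancel_left, mul_inv_cancel_left,
        inv_mul_cancel, mul_inv_cancel, hu2, hu]
    · show SimConj4 (eta23 (σ1, σ2, σ1 * σ2 * σ1⁻¹, σ1)) ((σ1, σ2, σ2, σ2⁻¹ * σ1 * σ2))
      refine ⟨σ1 * σ2, ?_, ?_, ?_, ?_⟩ <;>
      simp only [Braid.b3, Braid.eta23, Braid.eta234, hσ2, mul_assoc, mul_inv_rev, inv_inv,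
        inv_one, one_mul, mul_one, hui, inv_mul_cancel_left, mul_inv_cancel_left,
        inv_mul_cancel, mul_inv_cancel, hu2, hu]
  · intro i
    fin_cases i
    · show SimConj4 (eta234 (σ1, σ1, σ2, σ1 * σ2 * σ1⁻¹)) ((σ1, σ2, σ1 * σ2 * σ1⁻¹, σ1))
      refine ⟨σ1, ?_, ?_, ?_, ?_⟩ <;>
      simp only [Braid.b3, Braid.eta23, Braid.eta234, hσ2, mul_assoc, mul_inv_rev, inv_inv,
        inv_one, one_mul, mul_one, hui, inv_mul_cancel_left, mul_inv_cancel_left,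
        inv_mul_cancel, mul_inv_cancel, hu2, hu]
    · show SimConj4 (eta234 (σ1, σ2 * σ1 * σ2⁻¹, σ2, σ2)) ((σ1, σ2, σ2, σ2⁻¹ * σ1 * σ2))
      refine ⟨σ1⁻¹, ?_, ?_, ?_, ?_⟩ <;>
      simp only [Braid.b3, Braid.eta23, Braid.eta234, hσ2, mul_assoc, mul_inv_rev, inv_inv,
        inv_one, one_mul, mul_one, hui, inv_mul_cancel_left, mul_inv_cancel_left,
        inv_mul_cancel, mul_inv_cancel, hu2, hu]
    · show SimConj4 (eta234 (σ1, σ2, σ1, σ2)) ((σ1, σ2 * σ1 * σ2⁻¹, σ2, σ2))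
      refine ⟨(1:G), ?_, ?_, ?_, ?_⟩ <;>
      simp only [Braid.b3, Braid.eta23, Braid.eta234, hσ2, mul_assoc, mul_inv_rev, inv_inv,
        inv_one, one_mul, mul_one, hui, inv_mul_cancel_left, mul_inv_cancel_left,
        inv_mul_cancel, mul_inv_cancel, hu2, hu]
    · show SimConj4 (eta234 (σ1, σ2, σ2⁻¹ * σ1 * σ2, σ1 * σ2 * σ1⁻¹)) ((σ1, σ1, σ2, σ1 * σ2 * σ1⁻¹))
      refine ⟨σ1⁻¹, ?_, ?_, ?_, ?_⟩ <;>
      simp only [Braid.b3, Braid.eta23, Braid.eta234, hσ2, mul_assoc, mul_inv_rev, inv_inv,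
        inv_one, one_mul, mul_one, hui, inv_mul_cancel_left, mul_inv_cancel_left,
        inv_mul_cancel, mul_inv_cancel, hu2, hu]
    · show SimConj4 (eta234 (σ1, σ2, σ2, σ2⁻¹ * σ1 * σ2)) ((σ1, σ2, σ1, σ2))
      refine ⟨(1:G), ?_, ?_, ?_, ?_⟩ <;>
      simp only [Braid.b3, Braid.eta23, Braid.eta234, hσ2, mul_assoc, mul_inv_rev, inv_inv,
        inv_one, one_mul, mul_one, hui, inv_mul_cancel_left, mul_inv_cancel_left,
        inv_mul_cancel, mul_inv_cancel, hu2, hu]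
    · show SimConj4 (eta234 (σ1, σ2, σ1 * σ2 * σ1⁻¹, σ1)) ((σ1, σ2, σ2⁻¹ * σ1 * σ2, σ1 * σ2 * σ1⁻¹))
      refine ⟨σ1⁻¹, ?_, ?_, ?_, ?_⟩ <;>
      simp only [Braid.b3, Braid.eta23, Braid.eta234, hσ2, mul_assoc, mul_inv_rev, inv_inv,
        inv_one, one_mul, mul_one, hui, inv_mul_cancel_left, mul_inv_cancel_left,
        inv_mul_cancel, mul_inv_cancel, hu2, hu]
  · exact BraidAux.S4aux
end

section
/- Let G be a group with trivial center and (σ1,σ2,σ3,σ4) ∈ G^4 a generating 4-system of G. If σ1² = σ2² = 1 and G is generated by σ2⁻¹σ3σ2, σ3, σ4, then f = (σ2⁻¹σ3σ2, σ3, σ4, σ1⁻¹σ4σ1) is a generating 4-system of G whose first two entries are conjugate to σ3 and whose last two entries are conjugate to σ4, and applying φ_{4,1} to f yields a tuple simultaneously conjugate to f. -/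
open Braid in
/-- Theorem (translation of braid orbits, case (a)): if `(σ₁,σ₂,σ₃,σ₄)` is a
generating 4-system of a centerless group `G`, `σ₁² = σ₂² = 1`, and
`G = ⟨σ₂⁻¹σ₃σ₂, σ₃, σ₄⟩`, then `f = (σ₂⁻¹σ₃σ₂, σ₃, σ₄, σ₁⁻¹σ₄σ₁)` is a
generating 4-system with first two entries conjugate to `σ₃`, last two entries
conjugate to `σ₄`, and φ₄,₁ fixes the class of `f`. -/
theorem statement10 {G : Type*} [Group G] (hZ : Subgroup.center G = ⊥)
    (σ1 σ2 σ3 σ4 : G) (hsys : IsGenSys4 (σ1, σ2, σ3, σ4))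
    (h1 : σ1 ^ 2 = 1) (h2 : σ2 ^ 2 = 1)
    (hgen : Subgroup.closure {σ2⁻¹ * σ3 * σ2, σ3, σ4} = ⊤) :
    IsGenSys4 (σ2⁻¹ * σ3 * σ2, σ3, σ4, σ1⁻¹ * σ4 * σ1) ∧
    IsConj σ3 (σ2⁻¹ * σ3 * σ2) ∧ IsConj σ3 σ3 ∧
    IsConj σ4 σ4 ∧ IsConj σ4 (σ1⁻¹ * σ4 * σ1) ∧
    SimConj4 (phi41 (σ2⁻¹ * σ3 * σ2, σ3, σ4, σ1⁻¹ * σ4 * σ1))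
      (σ2⁻¹ * σ3 * σ2, σ3, σ4, σ1⁻¹ * σ4 * σ1) := by
  have hprod : σ1 * σ2 * σ3 * σ4 = 1 := hsys.1
  have h1' : σ1 * σ1 = 1 := by rw [← pow_two]; exact h1
  have h2' : σ2 * σ2 = 1 := by rw [← pow_two]; exact h2
  have hin1 : σ1⁻¹ = σ1 := inv_eq_of_mul_eq_one_right h1'
  have hin2 : σ2⁻¹ = σ2 := inv_eq_of_mul_eq_one_right h2'
  have e1 : ∀ x : G, σ1 * (σ1 * x) = x := by
    intro x; rw [← mul_assoc, h1', one_mul]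
  have e2 : ∀ x : G, σ2 * (σ2 * x) = x := by
    intro x; rw [← mul_assoc, h2', one_mul]
  have hσ4 : σ4 = σ3⁻¹ * (σ2⁻¹ * σ1⁻¹) := by
    have h := congrArg (fun x => (σ1 * σ2 * σ3)⁻¹ * x) hprod
    simpa [mul_assoc] using h
  refine ⟨⟨?_, ?_⟩, isConj_iff.2 ⟨σ2⁻¹, by group⟩, IsConj.refl _, IsConj.refl _,
    isConj_iff.2 ⟨σ1⁻¹, by group⟩, ?_⟩
  · subst hσ4
    simp [hin1, hin2, mul_assoc, e1, e2, h1', h2']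
  · rw [eq_top_iff, ← hgen]
    exact Subgroup.closure_mono (by intro x hx; simp only [Set.mem_insert_iff,
      Set.mem_singleton_iff] at hx ⊢; tauto)
  · refine ⟨σ2 * σ3, ?_, ?_, ?_, ?_⟩ <;>
    · show _ = _
      subst hσ4
      simp only [phi41, b4i, b2, Function.comp_apply]
      simp [hin1, hin2, mul_assoc, e1, e2, h1', h2']
end

section
/- Let G be a group with trivial center and (σ1,σ2,σ3,σ4) ∈ G^4 a generating 4-system of G. If σ3² = σ4² = 1 and G is generated by σ1, σ4σ1σ4⁻¹, σ4σ2σ4⁻¹, then g = (σ1, σ4σ1σ4⁻¹, σ4σ2σ4⁻¹, σ4σ3σ2σ3⁻¹σ4⁻¹) is a generating 4-system of G whose first two entries are conjugate to σ1 and whose last two entries are conjugate to σ2, and applying φ_{4,1} to g yields a tuple simultaneously conjugate to g. -/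
open Braid in
/-- Theorem (translation of braid orbits, case (b)): if `(σ₁,σ₂,σ₃,σ₄)` is a
generating 4-system of a centerless group `G`, `σ₃² = σ₄² = 1`, and
`G = ⟨σ₁, σ₄σ₁σ₄⁻¹, σ₄σ₂σ₄⁻¹⟩`, then
`g = (σ₁, σ₄σ₁σ₄⁻¹, σ₄σ₂σ₄⁻¹, σ₄σ₃σ₂σ₃⁻¹σ₄⁻¹)` is a generating 4-system with
first two entries conjugate to `σ₁`, last two entries conjugate to `σ₂`, and
φ₄,₁ fixes the class of `g`. -/
theorem statement11 {G : Type*} [Group G] (hZ : Subgroup.center G = ⊥)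
    (σ1 σ2 σ3 σ4 : G) (hsys : IsGenSys4 (σ1, σ2, σ3, σ4))
    (h3 : σ3 ^ 2 = 1) (h4 : σ4 ^ 2 = 1)
    (hgen : Subgroup.closure {σ1, σ4 * σ1 * σ4⁻¹, σ4 * σ2 * σ4⁻¹} = ⊤) :
    IsGenSys4 (σ1, σ4 * σ1 * σ4⁻¹, σ4 * σ2 * σ4⁻¹,
      σ4 * σ3 * σ2 * σ3⁻¹ * σ4⁻¹) ∧
    IsConj σ1 σ1 ∧ IsConj σ1 (σ4 * σ1 * σ4⁻¹) ∧
    IsConj σ2 (σ4 * σ2 * σ4⁻¹) ∧ IsConj σ2 (σ4 * σ3 * σ2 * σ3⁻¹ * σ4⁻¹) ∧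
    SimConj4
      (phi41 (σ1, σ4 * σ1 * σ4⁻¹, σ4 * σ2 * σ4⁻¹, σ4 * σ3 * σ2 * σ3⁻¹ * σ4⁻¹))
      (σ1, σ4 * σ1 * σ4⁻¹, σ4 * σ2 * σ4⁻¹, σ4 * σ3 * σ2 * σ3⁻¹ * σ4⁻¹) := by
  obtain ⟨hprod, hcl⟩ := hsys
  have h3'' : σ3 * σ3 = 1 := by rw [← sq, h3]
  have h4'' : σ4 * σ4 = 1 := by rw [← sq, h4]
  have h3' : ∀ x : G, σ3 * (σ3 * x) = x := by
    intro x; rw [← mul_assoc, h3'', one_mul]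
  have h4' : ∀ x : G, σ4 * (σ4 * x) = x := by
    intro x; rw [← mul_assoc, h4'', one_mul]
  have hi3 : σ3⁻¹ = σ3 := by rw [inv_eq_iff_mul_eq_one, h3'']
  have hi4 : σ4⁻¹ = σ4 := by rw [inv_eq_iff_mul_eq_one, h4'']
  have hp : σ1 * (σ2 * (σ3 * σ4)) = 1 := by
    have h : σ1 * σ2 * σ3 * σ4 = 1 := hprod
    simpa [mul_assoc] using h
  have h1 : σ1 = σ4 * σ3 * σ2⁻¹ := by
    have := eq_inv_of_mul_eq_one_left hp
    rw [this, mul_inv_rev, mul_inv_rev, hi3, hi4, mul_assoc]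
  refine ⟨⟨?_, ?_⟩, IsConj.refl _, isConj_iff.mpr ⟨σ4, by group⟩,
    isConj_iff.mpr ⟨σ4, by group⟩, isConj_iff.mpr ⟨σ4 * σ3, by group⟩,
    ⟨σ1 * σ4, ?_, ?_, ?_, ?_⟩⟩
  · show σ1 * (σ4 * σ1 * σ4⁻¹) * (σ4 * σ2 * σ4⁻¹) * (σ4 * σ3 * σ2 * σ3⁻¹ * σ4⁻¹) = 1
    rw [h1]
    simp [mul_inv_rev, hi3, hi4, mul_assoc, h3', h4', h3'', h4'']
  · rw [eq_top_iff, ← hgen]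
    apply Subgroup.closure_mono
    intro x hx
    simp only [Set.mem_insert_iff, Set.mem_singleton_iff] at hx ⊢
    tauto
  all_goals
    simp only [phi41, b2, b4i, Function.comp_apply]
    rw [h1]
    simp [mul_inv_rev, hi3, hi4, mul_assoc, h3', h4', h3'', h4'']
end

section
/- Let G be a nontrivial group with trivial center and σ1, σ2 ∈ G with G = ⟨σ1, σ2⟩, σ1σ2σ1 = σ2σ1σ2, and (σ1σ2σ1)² = 1. Set h1 = (σ1, σ2, σ1, σ1σ2σ1), h2 = (σ2σ1σ2⁻¹, σ2, σ1, σ2σ1²), h3 = (σ2, σ1, σ1, σ2σ1²), h4 = (σ2, σ2, σ1, σ2²σ1). Then: σ2 is conjugate to σ1, and σ2σ1² and σ2²σ1 are conjugate to σ1σ2σ1; each h_i is a generating 4-system of G; h1, h2, h3, h4 are pairwise not simultaneously conjugate; and on their simultaneous conjugacy classes, β_{12} induces the permutation (1,2,3)(4), β_{13} induces (1,3,4)(2), and β_{14} induces (1,4,2)(3). In particular {[h1],[h2],[h3],[h4]} is a single orbit of length 4 under β_{12}, β_{13}, β_{14}, and these three permutations generate the alternating group A_4 on the four classes. -/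
open Braid in
/-- Theorem (orbit of length 4): for `G = ⟨σ₁,σ₂⟩` nontrivial with trivial
center, `σ₁σ₂σ₁ = σ₂σ₁σ₂` and `(σ₁σ₂σ₁)² = 1`, the four tuples `h₁,…,h₄` are
generating 4-systems with pairwise distinct simultaneous conjugacy classes,
`σ₂` is conjugate to `σ₁`, `σ₂σ₁²` and `σ₂²σ₁` are conjugate to `σ₁σ₂σ₁`, and on
the four classes β₁₂ induces `(1,2,3)`, β₁₃ induces `(1,3,4)`, β₁₄ induces
`(1,4,2)` (0-indexed below); these three 3-cycles generate the alternating
group `A₄`. -/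
theorem statement12 {G : Type*} [Group G] [Nontrivial G]
    (hZ : Subgroup.center G = ⊥) (σ1 σ2 : G)
    (hgen : Subgroup.closure {σ1, σ2} = ⊤)
    (hbraid : σ1 * σ2 * σ1 = σ2 * σ1 * σ2)
    (hord : (σ1 * σ2 * σ1) ^ 2 = 1)
    (h : Fin 4 → G × G × G × G)
    (hh : h = ![(σ1, σ2, σ1, σ1 * σ2 * σ1),
                (σ2 * σ1 * σ2⁻¹, σ2, σ1, σ2 * σ1 ^ 2),
                (σ2, σ1, σ1, σ2 * σ1 ^ 2),
                (σ2, σ2, σ1, σ2 ^ 2 * σ1)])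
    (q12 q13 q14 : Equiv.Perm (Fin 4))
    (hq12 : q12 = c[0, 1, 2]) (hq13 : q13 = c[0, 2, 3]) (hq14 : q14 = c[0, 3, 1]) :
    IsConj σ1 σ2 ∧
    IsConj (σ1 * σ2 * σ1) (σ2 * σ1 ^ 2) ∧
    IsConj (σ1 * σ2 * σ1) (σ2 ^ 2 * σ1) ∧
    (∀ i, IsGenSys4 (h i)) ∧
    (∀ i j : Fin 4, i ≠ j → ¬ SimConj4 (h i) (h j)) ∧
    (∀ i, SimConj4 (b12 (h i)) (h (q12 i))) ∧
    (∀ i, SimConj4 (b13 (h i)) (h (q13 i))) ∧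
    (∀ i, SimConj4 (b14 (h i)) (h (q14 i))) ∧
    Subgroup.closure {q12, q13, q14} = alternatingGroup (Fin 4) := by
  subst hh hq12 hq13 hq14
  obtain ⟨x, hX⟩ : ∃ x, x = σ1*σ2*σ1 := ⟨_, rfl⟩
  obtain ⟨y, hY⟩ : ∃ y, y = σ1*σ2 := ⟨_, rfl⟩
  have Hxx : x * x = 1 := by rw [hX, ← sq]; exact hord
  have Hyyy : y * (y * y) = 1 := by
    have h1 : y * (y * y) = (σ1*σ2*σ1) * (σ2*σ1*σ2) := by rw [hY]; group
    rw [h1, ← hbraid, ← sq]; exact hord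
  have Hs : σ1 = y*(y*x) := by
    have h1 : y*(y*x) = σ1 * ((σ2*σ1*σ2)*(σ1*σ2*σ1)) := by rw [hX, hY]; group
    rw [h1, ← hbraid, ← sq, hord, mul_one]
  have Ht : σ2 = x*(y*y) := by
    have h1 : x*(y*y) = (σ1*σ2*σ1) * ((σ1*σ2*σ1) * σ2) := by rw [hX, hY]; group
    rw [h1, ← mul_assoc, ← sq, hord, one_mul]
  have Hxi : x⁻¹ = x := inv_eq_of_mul_eq_one_right Hxx
  have Hyi : y⁻¹ = y*y := inv_eq_of_mul_eq_one_right Hyyy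
  have Hx2 : ∀ z:G, x*(x*z) = z := fun z => by rw [← mul_assoc, Hxx, one_mul]
  have Hy3 : ∀ z:G, y*(y*(y*z)) = z := fun z => by
    rw [show y*(y*(y*z)) = (y*(y*y))*z by group, Hyyy, one_mul]
  have Hcomm : σ1 * σ2 = σ2 * σ1 → False := by
    intro hc
    have hcen : ∀ τ : G, Subgroup.closure {σ1, σ2} ≤ Subgroup.centralizer {τ} → τ = 1 := by
      intro τ hle
      have hmem : τ ∈ Subgroup.center G := by
        rw [Subgroup.mem_center_iff]
        intro g
        have hg : g ∈ Subgroup.centralizer {τ} := hle (by rw [hgen]; trivial)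
        exact (Subgroup.mem_centralizer_iff.mp hg τ (Set.mem_singleton τ)).symm
      rw [hZ, Subgroup.mem_bot] at hmem; exact hmem
    have hs1 : σ1 = 1 := by
      refine hcen σ1 ((Subgroup.closure_le _).mpr ?_)
      intro z hz
      rcases hz with rfl | hz
      · exact Subgroup.mem_centralizer_iff.mpr (by rintro g rfl; rfl)
      · rcases hz with rfl
        exact Subgroup.mem_centralizer_iff.mpr (by rintro g rfl; exact hc)
    have hs2 : σ2 = 1 := by
      refine hcen σ2 ((Subgroup.closure_le _).mpr ?_)
      intro z hz
      rcases hz with rfl | hz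
      · exact Subgroup.mem_centralizer_iff.mpr (by rintro g rfl; exact hc.symm)
      · rcases hz with rfl
        exact Subgroup.mem_centralizer_iff.mpr (by rintro g rfl; rfl)
    obtain ⟨g, hg1⟩ := exists_ne (1:G)
    have hgc : g ∈ Subgroup.closure {σ1, σ2} := by rw [hgen]; trivial
    rw [hs1, hs2, Set.pair_eq_singleton, Subgroup.closure_singleton_one,
      Subgroup.mem_bot] at hgc
    exact hg1 hgc
  have Hne : σ1 = σ2 → False := fun hc => Hcomm (by rw [hc])
  have Hne' : σ2 = σ1 → False := fun hc => Hne hc.symm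
  have Hsym : ∀ a b : G×G×G×G, SimConj4 a b → SimConj4 b a := by
    intro a b hcon
    unfold SimConj4 at hcon ⊢
    obtain ⟨γ, e1, e2, e3, e4⟩ := hcon
    exact ⟨γ⁻¹, by rw [← e1]; group, by rw [← e2]; group,
      by rw [← e3]; group, by rw [← e4]; group⟩
  refine ⟨?_, ?_, ?_, ?_, ?_, ?_, ?_, ?_, ?_⟩
  · rw [isConj_iff]
    refine ⟨y, ?_⟩
    simp only [Hs, Ht, pow_two, mul_inv_rev, inv_one, Hxi, Hyi,
      mul_assoc, Hxx, Hyyy, Hx2, Hy3, one_mul, mul_one]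
  · rw [isConj_iff]
    refine ⟨x*y, ?_⟩
    simp only [Hs, Ht, pow_two, mul_inv_rev, inv_one, Hxi, Hyi,
      mul_assoc, Hxx, Hyyy, Hx2, Hy3, one_mul, mul_one]
  · rw [isConj_iff]
    refine ⟨x*(y*y), ?_⟩
    simp only [Hs, Ht, pow_two, mul_inv_rev, inv_one, Hxi, Hyi,
      mul_assoc, Hxx, Hyyy, Hx2, Hy3, one_mul, mul_one]
  · -- generating systems
    have hsub : ∀ S : Set G, σ1 ∈ S → σ2 ∈ S → Subgroup.closure S = ⊤ := by
      intro S h1 h2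
      rw [eq_top_iff, ← hgen]
      refine Subgroup.closure_mono ?_
      intro z hz
      rcases hz with rfl | hz
      · exact h1
      · rcases hz with rfl; exact h2
    intro i
    fin_cases i
    · show IsGenSys4 (σ1, σ2, σ1, σ1 * σ2 * σ1)
      refine ⟨?_, hsub _ (by simp) (by simp)⟩
      simp only [Hs, Ht, pow_two, mul_inv_rev, inv_one, Hxi, Hyi,
        mul_assoc, Hxx, Hyyy, Hx2, Hy3, one_mul, mul_one]
    · show IsGenSys4 (σ2 * σ1 * σ2⁻¹, σ2, σ1, σ2 * σ1 ^ 2)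
      refine ⟨?_, hsub _ (by simp) (by simp)⟩
      simp only [Hs, Ht, pow_two, mul_inv_rev, inv_one, Hxi, Hyi,
        mul_assoc, Hxx, Hyyy, Hx2, Hy3, one_mul, mul_one]
    · show IsGenSys4 (σ2, σ1, σ1, σ2 * σ1 ^ 2)
      refine ⟨?_, hsub _ (by simp) (by simp)⟩
      simp only [Hs, Ht, pow_two, mul_inv_rev, inv_one, Hxi, Hyi,
        mul_assoc, Hxx, Hyyy, Hx2, Hy3, one_mul, mul_one]
    · show IsGenSys4 (σ2, σ2, σ1, σ2 ^ 2 * σ1)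
      refine ⟨?_, hsub _ (by simp) (by simp)⟩
      simp only [Hs, Ht, pow_two, mul_inv_rev, inv_one, Hxi, Hyi,
        mul_assoc, Hxx, Hyyy, Hx2, Hy3, one_mul, mul_one]
  · -- pairwise non-conjugate
    have N01 : ¬ SimConj4 (σ1, σ2, σ1, σ1*σ2*σ1) (σ2*σ1*σ2⁻¹, σ2, σ1, σ2*σ1^2) := by
      intro hcon; unfold SimConj4 at hcon
      obtain ⟨γ, e1, e2, e3, e4⟩ := hcon
      exact Hcomm (mul_inv_eq_iff_eq_mul.mp (e1.symm.trans e3)).symm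
    have N02 : ¬ SimConj4 (σ1, σ2, σ1, σ1*σ2*σ1) (σ2, σ1, σ1, σ2*σ1^2) := by
      intro hcon; unfold SimConj4 at hcon
      obtain ⟨γ, e1, e2, e3, e4⟩ := hcon
      exact Hne' (e1.symm.trans e3)
    have N03 : ¬ SimConj4 (σ1, σ2, σ1, σ1*σ2*σ1) (σ2, σ2, σ1, σ2^2*σ1) := by
      intro hcon; unfold SimConj4 at hcon
      obtain ⟨γ, e1, e2, e3, e4⟩ := hcon
      exact Hne' (e1.symm.trans e3)
    have N12 : ¬ SimConj4 (σ2*σ1*σ2⁻¹, σ2, σ1, σ2*σ1^2) (σ2, σ1, σ1, σ2*σ1^2) := by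
      intro hcon; unfold SimConj4 at hcon
      obtain ⟨γ, e1, e2, e3, e4⟩ := hcon
      exact Hne' (mul_left_cancel (mul_right_cancel (e2.trans e3.symm)))
    have N13 : ¬ SimConj4 (σ2*σ1*σ2⁻¹, σ2, σ1, σ2*σ1^2) (σ2, σ2, σ1, σ2^2*σ1) := by
      intro hcon; unfold SimConj4 at hcon
      obtain ⟨γ, e1, e2, e3, e4⟩ := hcon
      have h5 : σ2 = σ2*σ1*σ2⁻¹ := by
        calc σ2 = γ⁻¹*(σ2*σ1*σ2⁻¹)*γ := e1.symm
        _ = (γ⁻¹*σ2*γ)*(γ⁻¹*σ1*γ)*(γ⁻¹*σ2*γ)⁻¹ := by group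
        _ = σ2*σ1*σ2⁻¹ := by rw [e2, e3]
      exact Hne (mul_left_cancel (mul_inv_eq_iff_eq_mul.mp h5.symm))
    have N23 : ¬ SimConj4 (σ2, σ1, σ1, σ2*σ1^2) (σ2, σ2, σ1, σ2^2*σ1) := by
      intro hcon; unfold SimConj4 at hcon
      obtain ⟨γ, e1, e2, e3, e4⟩ := hcon
      exact Hne' (e2.symm.trans e3)
    intro i j hij
    fin_cases i <;> fin_cases j <;>
      first
        | exact absurd rfl hij
        | exact N01 | exact N02 | exact N03 | exact N12 | exact N13 | exact N23
        | exact fun hcon => N01 (Hsym _ _ hcon)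
        | exact fun hcon => N02 (Hsym _ _ hcon)
        | exact fun hcon => N03 (Hsym _ _ hcon)
        | exact fun hcon => N12 (Hsym _ _ hcon)
        | exact fun hcon => N13 (Hsym _ _ hcon)
        | exact fun hcon => N23 (Hsym _ _ hcon)
  · intro i
    fin_cases i
    · show SimConj4 (b12 (σ1, σ2, σ1, σ1 * σ2 * σ1)) (σ2 * σ1 * σ2⁻¹, σ2, σ1, σ2 * σ1 ^ 2)
      refine ⟨y*(y*x), ?_, ?_, ?_, ?_⟩ <;>
        simp only [b12, b13, b14, b2, b3, b4, b2i, b3i, b4i, Function.comp_apply, Hs, Ht, pow_two, mul_inv_rev, inv_one, Hxi, Hyi, mul_assoc, Hxx, Hyyy, Hx2, Hy3, one_mul, mul_one]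
    · show SimConj4 (b12 (σ2 * σ1 * σ2⁻¹, σ2, σ1, σ2 * σ1 ^ 2)) (σ2, σ1, σ1, σ2 * σ1 ^ 2)
      refine ⟨1, ?_, ?_, ?_, ?_⟩ <;>
        simp only [b12, b13, b14, b2, b3, b4, b2i, b3i, b4i, Function.comp_apply, Hs, Ht, pow_two, mul_inv_rev, inv_one, Hxi, Hyi, mul_assoc, Hxx, Hyyy, Hx2, Hy3, one_mul, mul_one]
    · show SimConj4 (b12 (σ2, σ1, σ1, σ2 * σ1 ^ 2)) (σ1, σ2, σ1, σ1 * σ2 * σ1)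
      refine ⟨x*y, ?_, ?_, ?_, ?_⟩ <;>
        simp only [b12, b13, b14, b2, b3, b4, b2i, b3i, b4i, Function.comp_apply, Hs, Ht, pow_two, mul_inv_rev, inv_one, Hxi, Hyi, mul_assoc, Hxx, Hyyy, Hx2, Hy3, one_mul, mul_one]
    · show SimConj4 (b12 (σ2, σ2, σ1, σ2 ^ 2 * σ1)) (σ2, σ2, σ1, σ2 ^ 2 * σ1)
      refine ⟨1, ?_, ?_, ?_, ?_⟩ <;>
        simp only [b12, b13, b14, b2, b3, b4, b2i, b3i, b4i, Function.comp_apply, Hs, Ht, pow_two, mul_inv_rev, inv_one, Hxi, Hyi, mul_assoc, Hxx, Hyyy, Hx2, Hy3, one_mul, mul_one]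
  · intro i
    fin_cases i
    · show SimConj4 (b13 (σ1, σ2, σ1, σ1 * σ2 * σ1)) (σ2, σ1, σ1, σ2 * σ1 ^ 2)
      refine ⟨x*(y*(y*x)), ?_, ?_, ?_, ?_⟩ <;>
        simp only [b12, b13, b14, b2, b3, b4, b2i, b3i, b4i, Function.comp_apply, Hs, Ht, pow_two, mul_inv_rev, inv_one, Hxi, Hyi, mul_assoc, Hxx, Hyyy, Hx2, Hy3, one_mul, mul_one]
    · show SimConj4 (b13 (σ2 * σ1 * σ2⁻¹, σ2, σ1, σ2 * σ1 ^ 2)) (σ2 * σ1 * σ2⁻¹, σ2, σ1, σ2 * σ1 ^ 2)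
      refine ⟨1, ?_, ?_, ?_, ?_⟩ <;>
        simp only [b12, b13, b14, b2, b3, b4, b2i, b3i, b4i, Function.comp_apply, Hs, Ht, pow_two, mul_inv_rev, inv_one, Hxi, Hyi, mul_assoc, Hxx, Hyyy, Hx2, Hy3, one_mul, mul_one]
    · show SimConj4 (b13 (σ2, σ1, σ1, σ2 * σ1 ^ 2)) (σ2, σ2, σ1, σ2 ^ 2 * σ1)
      refine ⟨x*(y*(x*(y*x))), ?_, ?_, ?_, ?_⟩ <;>
        simp only [b12, b13, b14, b2, b3, b4, b2i, b3i, b4i, Function.comp_apply, Hs, Ht, pow_two, mul_inv_rev, inv_one, Hxi, Hyi, mul_assoc, Hxx, Hyyy, Hx2, Hy3, one_mul, mul_one]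
    · show SimConj4 (b13 (σ2, σ2, σ1, σ2 ^ 2 * σ1)) (σ1, σ2, σ1, σ1 * σ2 * σ1)
      refine ⟨x*(y*y), ?_, ?_, ?_, ?_⟩ <;>
        simp only [b12, b13, b14, b2, b3, b4, b2i, b3i, b4i, Function.comp_apply, Hs, Ht, pow_two, mul_inv_rev, inv_one, Hxi, Hyi, mul_assoc, Hxx, Hyyy, Hx2, Hy3, one_mul, mul_one]
  · intro i
    fin_cases i
    · show SimConj4 (b14 (σ1, σ2, σ1, σ1 * σ2 * σ1)) (σ2, σ2, σ1, σ2 ^ 2 * σ1)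
      refine ⟨1, ?_, ?_, ?_, ?_⟩ <;>
        simp only [b12, b13, b14, b2, b3, b4, b2i, b3i, b4i, Function.comp_apply, Hs, Ht, pow_two, mul_inv_rev, inv_one, Hxi, Hyi, mul_assoc, Hxx, Hyyy, Hx2, Hy3, one_mul, mul_one]
    · show SimConj4 (b14 (σ2 * σ1 * σ2⁻¹, σ2, σ1, σ2 * σ1 ^ 2)) (σ1, σ2, σ1, σ1 * σ2 * σ1)
      refine ⟨1, ?_, ?_, ?_, ?_⟩ <;>
        simp only [b12, b13, b14, b2, b3, b4, b2i, b3i, b4i, Function.comp_apply, Hs, Ht, pow_two, mul_inv_rev, inv_one, Hxi, Hyi, mul_assoc, Hxx, Hyyy, Hx2, Hy3, one_mul, mul_one]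
    · show SimConj4 (b14 (σ2, σ1, σ1, σ2 * σ1 ^ 2)) (σ2, σ1, σ1, σ2 * σ1 ^ 2)
      refine ⟨x*(y*(x*y)), ?_, ?_, ?_, ?_⟩ <;>
        simp only [b12, b13, b14, b2, b3, b4, b2i, b3i, b4i, Function.comp_apply, Hs, Ht, pow_two, mul_inv_rev, inv_one, Hxi, Hyi, mul_assoc, Hxx, Hyyy, Hx2, Hy3, one_mul, mul_one]
    · show SimConj4 (b14 (σ2, σ2, σ1, σ2 ^ 2 * σ1)) (σ2 * σ1 * σ2⁻¹, σ2, σ1, σ2 * σ1 ^ 2)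
      refine ⟨1, ?_, ?_, ?_, ?_⟩ <;>
        simp only [b12, b13, b14, b2, b3, b4, b2i, b3i, b4i, Function.comp_apply, Hs, Ht, pow_two, mul_inv_rev, inv_one, Hxi, Hyi, mul_assoc, Hxx, Hyyy, Hx2, Hy3, one_mul, mul_one]
  · -- the three 3-cycles generate A₄
    have m1 : (c[0,1,2] : Equiv.Perm (Fin 4)) ∈
        Subgroup.closure {(c[0,1,2] : Equiv.Perm (Fin 4)), c[0,2,3], c[0,3,1]} :=
      Subgroup.subset_closure (Set.mem_insert _ _)
    have m2 : (c[0,2,3] : Equiv.Perm (Fin 4)) ∈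
        Subgroup.closure {(c[0,1,2] : Equiv.Perm (Fin 4)), c[0,2,3], c[0,3,1]} :=
      Subgroup.subset_closure (Set.mem_insert_of_mem _ (Set.mem_insert _ _))
    have m3 : (c[0,3,1] : Equiv.Perm (Fin 4)) ∈
        Subgroup.closure {(c[0,1,2] : Equiv.Perm (Fin 4)), c[0,2,3], c[0,3,1]} :=
      Subgroup.subset_closure
        (Set.mem_insert_of_mem _ (Set.mem_insert_of_mem _ rfl))
    refine le_antisymm ((Subgroup.closure_le _).mpr ?_) ?_
    · intro g hg
      rcases hg with rfl | hg
      · rw [SetLike.mem_coe, Equiv.Perm.mem_alternatingGroup]; decide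
      rcases hg with rfl | hg
      · rw [SetLike.mem_coe, Equiv.Perm.mem_alternatingGroup]; decide
      rcases hg with rfl
      · rw [SetLike.mem_coe, Equiv.Perm.mem_alternatingGroup]; decide
    · have key : ∀ g : Equiv.Perm (Fin 4), Equiv.Perm.sign g = 1 →
          g = 1 ∨ g = c[0,1,2] ∨ g = c[0,2,3] ∨ g = c[0,3,1] ∨
          g = c[0,1,2]⁻¹ ∨ g = c[0,2,3]⁻¹ ∨ g = c[0,3,1]⁻¹ ∨
          g = c[0,1,2] * c[0,2,3] ∨ g = c[0,1,2]⁻¹ * c[0,3,1]⁻¹ ∨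
          g = c[0,2,3] * c[0,3,1]⁻¹ ∨ g = c[0,1,2] * c[0,3,1]⁻¹ ∨
          g = c[0,1,2] * c[0,2,3]⁻¹ := by decide
      intro g hg
      rw [Equiv.Perm.mem_alternatingGroup] at hg
      rcases key g hg with rfl|rfl|rfl|rfl|rfl|rfl|rfl|rfl|rfl|rfl|rfl|rfl
      · exact Subgroup.one_mem _
      · exact m1
      · exact m2
      · exact m3
      · exact Subgroup.inv_mem _ m1
      · exact Subgroup.inv_mem _ m2
      · exact Subgroup.inv_mem _ m3
      · exact Subgroup.mul_mem _ m1 m2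
      · exact Subgroup.mul_mem _ (Subgroup.inv_mem _ m1) (Subgroup.inv_mem _ m3)
      · exact Subgroup.mul_mem _ m2 (Subgroup.inv_mem _ m3)
      · exact Subgroup.mul_mem _ m1 (Subgroup.inv_mem _ m3)
      · exact Subgroup.mul_mem _ m1 (Subgroup.inv_mem _ m2)
end

section
/- Let G be a group with trivial center, σ1, σ2, σ3 ∈ G with σ1⁴ = σ2⁴ = 1, σ1σ2σ3 = 1, and G generated by σ1⁻²σ3σ1², σ1⁻¹σ3σ1, σ3. Then v = (σ1⁻²σ3σ1², σ1⁻¹σ3σ1, σ3, σ1⁻³σ3σ1³) is a generating 4-system of G, all of whose entries are conjugate to σ3, and the cyclic shift (σ1⁻¹σ3σ1, σ3, σ1⁻³σ3σ1³, σ1⁻²σ3σ1²) of v is simultaneously conjugate to v. -/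
/-! The entries of `v` are the conjugates of `σ₃` by `σ₁²`, `σ₁`, `1`, `σ₁³`. Since `σ₁⁴ = 1`,
conjugation by `σ₁` permutes them cyclically, which is the simultaneous conjugacy. Their
product telescopes to `σ₁⁻² (σ₃σ₁)⁴ σ₁⁻²`, and `σ₃σ₁ = σ₂⁻¹` has order dividing 4. -/

namespace Braid

variable {G : Type*} [Group G]

theorem isConj_inv_mul_mul (g t : G) : IsConj t (g⁻¹ * t * g) :=
  isConj_iff.2 ⟨g⁻¹, by rw [inv_inv]⟩

theorem pow_three_eq_inv {x : G} (hx : x ^ 4 = 1) : x ^ 3 = x⁻¹ :=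
  eq_inv_of_mul_eq_one_left (by rwa [← pow_succ])

theorem mul_pow_eq_one_of_mul_mul_eq_one {a b c : G} {n : ℕ} (habc : a * b * c = 1)
    (hb : b ^ n = 1) : (c * a) ^ n = 1 := by
  have hca : c * a = b⁻¹ :=
    eq_inv_of_mul_eq_one_right (by rw [← mul_assoc, mul_eq_one_comm, ← mul_assoc, habc])
  rw [hca, inv_pow, hb, inv_one]

theorem conj_orbit_prod_eq_one {x t : G} (hx : x ^ 4 = 1) (htx : (t * x) ^ 4 = 1) :
    (x ^ 2)⁻¹ * t * x ^ 2 * (x⁻¹ * t * x) * t * ((x ^ 3)⁻¹ * t * x ^ 3) = 1 := by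
  rw [pow_three_eq_inv hx]
  calc _ = (x ^ 2)⁻¹ * (t * x) ^ 4 * (x ^ 2)⁻¹ := by
        simp only [pow_succ, pow_zero, one_mul]; group
    _ = (x ^ 4)⁻¹ := by rw [htx]; group
    _ = 1 := by rw [hx, inv_one]

theorem simConj4_rotate_conj_orbit {x : G} (t : G) (hx : x ^ 4 = 1) :
    SimConj4 (x⁻¹ * t * x, t, (x ^ 3)⁻¹ * t * x ^ 3, (x ^ 2)⁻¹ * t * x ^ 2)
      ((x ^ 2)⁻¹ * t * x ^ 2, x⁻¹ * t * x, t, (x ^ 3)⁻¹ * t * x ^ 3) := by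
  refine ⟨x, by simp only [pow_succ, pow_zero, one_mul]; group, rfl, ?_,
    by simp only [pow_succ, pow_zero, one_mul]; group⟩
  calc x⁻¹ * ((x ^ 3)⁻¹ * t * x ^ 3) * x = (x ^ 4)⁻¹ * t * x ^ 4 := by group
    _ = t := by rw [hx, inv_one, one_mul, mul_one]

end Braid

open Braid in
theorem statement14_general {G : Type*} [Group G] (σ1 σ2 σ3 : G) (h1 : σ1 ^ 4 = 1) (h2 : σ2 ^ 4 = 1)
    (hrel : σ1 * σ2 * σ3 = 1)
    (hgen : Subgroup.closure
      {(σ1 ^ 2)⁻¹ * σ3 * σ1 ^ 2, σ1⁻¹ * σ3 * σ1, σ3} = ⊤) :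
    IsGenSys4 ((σ1 ^ 2)⁻¹ * σ3 * σ1 ^ 2, σ1⁻¹ * σ3 * σ1, σ3,
      (σ1 ^ 3)⁻¹ * σ3 * σ1 ^ 3) ∧
    IsConj σ3 ((σ1 ^ 2)⁻¹ * σ3 * σ1 ^ 2) ∧
    IsConj σ3 (σ1⁻¹ * σ3 * σ1) ∧
    IsConj σ3 σ3 ∧
    IsConj σ3 ((σ1 ^ 3)⁻¹ * σ3 * σ1 ^ 3) ∧
    SimConj4
      (σ1⁻¹ * σ3 * σ1, σ3, (σ1 ^ 3)⁻¹ * σ3 * σ1 ^ 3, (σ1 ^ 2)⁻¹ * σ3 * σ1 ^ 2)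
      ((σ1 ^ 2)⁻¹ * σ3 * σ1 ^ 2, σ1⁻¹ * σ3 * σ1, σ3,
        (σ1 ^ 3)⁻¹ * σ3 * σ1 ^ 3) := by
  refine ⟨⟨conj_orbit_prod_eq_one h1 (mul_pow_eq_one_of_mul_mul_eq_one hrel h2),
      eq_top_mono (Subgroup.closure_mono ?_) hgen⟩,
    isConj_inv_mul_mul _ _, isConj_inv_mul_mul _ _, IsConj.refl _, isConj_inv_mul_mul _ _,
    simConj4_rotate_conj_orbit σ3 h1⟩
  exact Set.insert_subset_insert (Set.insert_subset_insert
    (Set.singleton_subset_iff.2 (Set.mem_insert _ _)))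

open Braid in
/-- Proposition (fixed points of α₄,₀): for `G` centerless with `σ₁⁴ = σ₂⁴ = 1`,
`σ₁σ₂σ₃ = 1` and `G = ⟨σ₁⁻²σ₃σ₁², σ₁⁻¹σ₃σ₁, σ₃⟩`, the tuple
`v = (σ₁⁻²σ₃σ₁², σ₁⁻¹σ₃σ₁, σ₃, σ₁⁻³σ₃σ₁³)` is a generating 4-system, all of
whose entries are conjugate to `σ₃`, and its cyclic shift is simultaneously
conjugate to `v`. -/
theorem statement14 {G : Type*} [Group G] (hZ : Subgroup.center G = ⊥)
    (σ1 σ2 σ3 : G) (h1 : σ1 ^ 4 = 1) (h2 : σ2 ^ 4 = 1)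
    (hrel : σ1 * σ2 * σ3 = 1)
    (hgen : Subgroup.closure
      {(σ1 ^ 2)⁻¹ * σ3 * σ1 ^ 2, σ1⁻¹ * σ3 * σ1, σ3} = ⊤) :
    IsGenSys4 ((σ1 ^ 2)⁻¹ * σ3 * σ1 ^ 2, σ1⁻¹ * σ3 * σ1, σ3,
      (σ1 ^ 3)⁻¹ * σ3 * σ1 ^ 3) ∧
    IsConj σ3 ((σ1 ^ 2)⁻¹ * σ3 * σ1 ^ 2) ∧
    IsConj σ3 (σ1⁻¹ * σ3 * σ1) ∧
    IsConj σ3 σ3 ∧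
    IsConj σ3 ((σ1 ^ 3)⁻¹ * σ3 * σ1 ^ 3) ∧
    SimConj4
      (σ1⁻¹ * σ3 * σ1, σ3, (σ1 ^ 3)⁻¹ * σ3 * σ1 ^ 3, (σ1 ^ 2)⁻¹ * σ3 * σ1 ^ 2)
      ((σ1 ^ 2)⁻¹ * σ3 * σ1 ^ 2, σ1⁻¹ * σ3 * σ1, σ3,
        (σ1 ^ 3)⁻¹ * σ3 * σ1 ^ 3) :=
  statement14_general σ1 σ2 σ3 h1 h2 hrel hgen
end

section
/- Let G be a finite group with trivial center, let m ≥ 6 and 3 ≤ n ≤ m−3, and let C1,…,Cm be nontrivial conjugacy classes of G. Then l^i(C1,…,Cm) ≥ |G| · l^i(C1,…,Cn) · l^i(C_{n+1},…,Cm). -/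
namespace ClassVectors

variable {G : Type*} [Group G]

/-- Simultaneous conjugacy of `m`-tuples. -/
def SimConjT {G : Type*} [Group G] {m : ℕ} (σ τ : Fin m → G) : Prop :=
  ∃ γ : G, ∀ i, γ⁻¹ * σ i * γ = τ i

/-- `C` is a nontrivial conjugacy class of `G`. -/
def IsNontrivialConjClass {G : Type*} [Group G] (C : Set G) : Prop :=
  ∃ g : G, g ≠ 1 ∧ C = {x | IsConj g x}

/-- `Σ(C₁,…,C_m)`: the set of `m`-tuples with `σᵢ ∈ Cᵢ`, product `1`
(in order `σ₀ σ₁ ⋯ σ_{m-1}`), generating `G`. -/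
def GenSystems (G : Type*) [Group G] (m : ℕ) (C : Fin m → Set G) :
    Set (Fin m → G) :=
  {σ | (∀ i, σ i ∈ C i) ∧ (List.ofFn σ).prod = 1 ∧
    Subgroup.closure (Set.range σ) = ⊤}

/-- `l^i(C₁,…,C_m)`: the number of simultaneous conjugacy classes of
generating systems in `Σ(C₁,…,C_m)`. -/
noncomputable def li (G : Type*) [Group G] (m : ℕ) (C : Fin m → Set G) : ℕ :=
  Nat.card (Quot (fun σ τ : GenSystems G m C => SimConjT σ.1 τ.1))

end ClassVectors

/-!
Since every tuple in `Σ(C)` generates `G` and `Z(G) = 1`, only `1` centralizes such a tuple,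
so `G` acts freely on `Σ(C)` by simultaneous conjugation and `|Σ(C)| = |G| · l^i(C)`.
Concatenation embeds `Σ(C₁,…,C_n) × Σ(C_{n+1},…,C_m)` into `Σ(C₁,…,C_m)`, because the first
half of a concatenation already generates `G`. Hence
`|G| · l^i(C₁,…,C_m) ≥ |G|² · l^i(C₁,…,C_n) · l^i(C_{n+1},…,C_m)`.
-/

namespace ClassVectors

open MulAction Subgroup
open scoped Pointwise

variable {G : Type*} [Group G] {m : ℕ}

theorem IsNontrivialConjClass.mem_of_isConj {C : Set G} (hC : IsNontrivialConjClass C)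
    {x y : G} (hxy : IsConj x y) (hx : x ∈ C) : y ∈ C := by
  obtain ⟨g, -, rfl⟩ := hC
  exact hx.trans hxy

theorem centralizer_eq_center_of_closure_eq_top {s : Set G} (hs : closure s = ⊤) :
    centralizer s = center G := by
  rw [← centralizer_closure, hs, coe_top, centralizer_univ]

theorem closure_range_smul_eq_top {α ι : Type*} [Group α] [MulDistribMulAction α G] (c : α)
    {σ : ι → G} (hσ : closure (Set.range σ) = ⊤) : closure (Set.range (c • σ)) = ⊤ := by
  rw [eq_top_iff]
  intro x _
  have hx : c • c⁻¹ • x ∈ c • closure (Set.range σ) :=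
    smul_mem_pointwise_smul _ _ _ (hσ ▸ mem_top _)
  rwa [smul_inv_smul, smul_closure, ← Set.range_smul] at hx

def genSystemsSubMulAction (C : Fin m → Set G)
    (hC : ∀ i {x y : G}, IsConj x y → x ∈ C i → y ∈ C i) :
    SubMulAction (ConjAct G) (Fin m → G) where
  carrier := GenSystems G m C
  smul_mem' c σ := by
    rintro ⟨hmem, hprod, hgen⟩
    refine ⟨fun i => hC i (isConj_iff.mpr ⟨_, (ConjAct.smul_def c (σ i)).symm⟩) (hmem i),
      ?_, closure_range_smul_eq_top c hgen⟩
    change (List.ofFn ((c • ·) ∘ σ)).prod = 1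
    rw [← List.map_ofFn, ← List.smul_prod', hprod, smul_one]

theorem stabilizer_genSystems_eq_bot (hZ : center G = ⊥) {C : Fin m → Set G}
    {hC : ∀ i {x y : G}, IsConj x y → x ∈ C i → y ∈ C i} (σ : genSystemsSubMulAction C hC) :
    stabilizer (ConjAct G) σ = ⊥ := by
  refine eq_bot_iff.mpr fun c hc => ?_
  have hfix : ∀ i, c • σ.1 i = σ.1 i := fun i => congrFun (congrArg Subtype.val hc) i
  have hgen : closure (Set.range σ.1) = ⊤ := σ.2.2.2
  have hcenter : ConjAct.ofConjAct c ∈ center G := by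
    rw [← centralizer_eq_center_of_closure_eq_top hgen, mem_centralizer_iff]
    rintro _ ⟨i, rfl⟩
    have hi := hfix i
    rw [ConjAct.smul_def, mul_inv_eq_iff_eq_mul] at hi
    exact hi.symm
  rw [hZ, mem_bot, EmbeddingLike.map_eq_one_iff] at hcenter
  exact mem_bot.mpr hcenter

theorem simConjT_iff_orbitRel {C : Fin m → Set G}
    {hC : ∀ i {x y : G}, IsConj x y → x ∈ C i → y ∈ C i} (σ τ : genSystemsSubMulAction C hC) :
    SimConjT σ.1 τ.1 ↔ orbitRel (ConjAct G) _ σ τ := by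
  rw [orbitRel_apply, mem_orbit_iff]
  constructor
  · rintro ⟨γ, hγ⟩
    refine ⟨ConjAct.toConjAct γ, Subtype.ext (funext fun i => ?_)⟩
    rw [SubMulAction.val_smul, Pi.smul_apply, ConjAct.smul_def, ConjAct.ofConjAct_toConjAct,
      ← hγ i]
    group
  · rintro ⟨c, rfl⟩
    refine ⟨ConjAct.ofConjAct c, fun i => ?_⟩
    rw [SubMulAction.val_smul, Pi.smul_apply, ConjAct.smul_def]
    group

theorem card_genSystems [Finite G] (hZ : center G = ⊥) (C : Fin m → Set G)
    (hC : ∀ i {x y : G}, IsConj x y → x ∈ C i → y ∈ C i) :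
    Nat.card (GenSystems G m C) = li G m C * Nat.card G := by
  let p := genSystemsSubMulAction C hC
  calc Nat.card (GenSystems G m C) = Nat.card p := rfl
    _ = Nat.card (orbitRel.Quotient (ConjAct G) p × ConjAct G) :=
      Nat.card_congr (selfEquivOrbitsQuotientProd (stabilizer_genSystems_eq_bot hZ))
    _ = li G m C * Nat.card G := by
      rw [Nat.card_prod, Nat.card_congr ConjAct.ofConjAct.toEquiv]
      exact congrArg (· * _) (Nat.card_congr (Quot.congrRight simConjT_iff_orbitRel).symm)

theorem append_mem_genSystems {n k : ℕ} {C : Fin (n + k) → Set G} {σ : Fin n → G}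
    {τ : Fin k → G} (hσ : σ ∈ GenSystems G n fun i => C (Fin.castAdd k i))
    (hτ : τ ∈ GenSystems G k fun j => C (Fin.natAdd n j)) :
    Fin.append σ τ ∈ GenSystems G (n + k) C := by
  obtain ⟨hσC, hσprod, hσgen⟩ := hσ
  obtain ⟨hτC, hτprod, -⟩ := hτ
  refine ⟨fun i => ?_, ?_, ?_⟩
  · cases i using Fin.addCases with
    | left i => rw [Fin.append_left]; exact hσC i
    | right j => rw [Fin.append_right]; exact hτC j
  · rw [List.ofFn_fin_append, List.prod_append, hσprod, hτprod, one_mul]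
  · refine top_unique (hσgen ▸ closure_mono ?_)
    rintro _ ⟨i, rfl⟩
    exact ⟨Fin.castAdd k i, Fin.append_left σ τ i⟩

theorem card_genSystems_mul_card_genSystems_le [Finite G] {n k : ℕ} (C : Fin (n + k) → Set G) :
    Nat.card (GenSystems G n fun i => C (Fin.castAdd k i)) *
        Nat.card (GenSystems G k fun j => C (Fin.natAdd n j)) ≤
      Nat.card (GenSystems G (n + k) C) := by
  rw [← Nat.card_prod]
  refine Nat.card_le_card_of_injective (fun p => ⟨_, append_mem_genSystems p.1.2 p.2.2⟩) ?_
  rintro ⟨⟨σ, _⟩, ⟨τ, _⟩⟩ ⟨⟨σ', _⟩, ⟨τ', _⟩⟩ h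
  have h' : Fin.append σ τ = Fin.append σ' τ' := congrArg Subtype.val h
  obtain rfl : σ = σ' := funext fun i => by simpa using congrFun h' (Fin.castAdd k i)
  obtain rfl : τ = τ' := funext fun j => by simpa using congrFun h' (Fin.natAdd n j)
  rfl

theorem card_mul_li_mul_li_le_li [Finite G] (hZ : center G = ⊥) {n k : ℕ}
    (C : Fin (n + k) → Set G) (hC : ∀ i {x y : G}, IsConj x y → x ∈ C i → y ∈ C i) :
    Nat.card G * li G n (fun i => C (Fin.castAdd k i)) * li G k (fun j => C (Fin.natAdd n j)) ≤
      li G (n + k) C := by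
  refine Nat.le_of_mul_le_mul_right ?_ (Nat.card_pos (α := G))
  calc Nat.card G * li G n (fun i => C (Fin.castAdd k i)) *
          li G k (fun j => C (Fin.natAdd n j)) * Nat.card G
        = Nat.card (GenSystems G n fun i => C (Fin.castAdd k i)) *
            Nat.card (GenSystems G k fun j => C (Fin.natAdd n j)) := by
          rw [card_genSystems hZ _ fun i => hC _, card_genSystems hZ _ fun j => hC _]
          ring
    _ ≤ Nat.card (GenSystems G (n + k) C) := card_genSystems_mul_card_genSystems_le C
    _ = li G (n + k) C * Nat.card G := card_genSystems hZ C hC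

theorem li_cast {m' : ℕ} (h : m' = m) (C : Fin m → Set G) :
    li G m' (fun i => C (Fin.cast h i)) = li G m C := by
  subst h
  rfl

end ClassVectors

open ClassVectors in
/-- Proposition (lower bound for `l^i`): for a finite centerless group `G`,
`m ≥ 6`, `3 ≤ n ≤ m − 3`, and nontrivial conjugacy classes `C₁,…,C_m`,
`l^i(C₁,…,C_m) ≥ |G| · l^i(C₁,…,C_n) · l^i(C_{n+1},…,C_m)`. -/
theorem statement18 {G : Type*} [Group G] [Finite G]
    (hZ : Subgroup.center G = ⊥)
    (m n : ℕ) (hnm : n ≤ m - 3)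
    (C : Fin m → Set G) (hC : ∀ i, IsNontrivialConjClass (C i)) :
    Nat.card G * li G n (fun i => C (Fin.castLE (by omega) i)) *
      li G (m - n) (fun i => C (Fin.cast (by omega) (Fin.natAdd n i))) ≤
    li G m C := by
  have hsplit : n + (m - n) = m := by omega
  rw [← li_cast hsplit]
  exact card_mul_li_mul_li_le_li hZ (fun i => C (Fin.cast hsplit i))
    fun i => (hC _).mem_of_isConj
end
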